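/- arXiv:1904.00174 — 4 statements merged into one kernel-verified Lean document; each statement's English description precedes it below -/
import Mathlib

section
/- Let U be an open, convex, bounded neighbourhood of 0 in a real Banach space X with Minkowski functional μ, let k(x) = μ(x)/(1−μ(x)) on U, and define k̄ : X → ℝ ∪ {+∞} by k̄(x) = k(x) for x ∈ U and k̄(x) = +∞ otherwise. Then k̄ is convex and lower semicontinuous on X. -/
open scoped Classical Pointwise

/-!
On `U` the function is `φ ∘ μ` with `φ t = t / (1 - t)`, which is increasing and convex on
`(-∞, 1)`, while the gauge `μ` is convex; hence `k` is convex on `U`, and extending a convex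
function on a convex set by `+∞` keeps it convex. The gauge is continuous and `U = {μ < 1}`, so
`k` is continuous on the open set `U`; at a point `x ∉ U` we have `μ x ≥ 1`, hence `μ y → 1⁻` as
`y → x` within `U`, and `k y → +∞`. This barrier behaviour makes the extension lower
semicontinuous at the points outside `U`.
-/

open Set Filter Topology

theorem strictMonoOn_div_one_sub : StrictMonoOn (fun t : ℝ => t / (1 - t)) (Iio 1) := by
  intro u hu v hv huv
  simp only [mem_Iio] at hu hv
  rw [div_lt_div_iff₀ (by linarith) (by linarith)]
  nlinarith

theorem convexOn_div_one_sub : ConvexOn ℝ (Iio 1) (fun t : ℝ => t / (1 - t)) := by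
  refine ⟨convex_Iio 1, fun s hs t ht a b ha hb hab => ?_⟩
  simp only [mem_Iio, smul_eq_mul] at hs ht ⊢
  have hst : a * s + b * t < 1 := by simpa using (convex_Iio (1 : ℝ)) hs ht ha hb hab
  rw [mul_div_assoc', mul_div_assoc', div_add_div _ _ (by linarith) (by linarith),
    div_le_div_iff₀ (by linarith) (mul_pos (by linarith) (by linarith))]
  obtain rfl : b = 1 - a := by linarith
  nlinarith [mul_nonneg (mul_nonneg ha hb) (sq_nonneg (s - t))]

theorem tendsto_div_one_sub_nhdsLT_one :
    Tendsto (fun t : ℝ => t / (1 - t)) (𝓝[<] 1) atTop := by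
  have hden : Tendsto (fun t : ℝ => 1 - t) (𝓝[<] 1) (𝓝[>] 0) := by
    refine tendsto_nhdsWithin_iff.2 ⟨?_, ?_⟩
    · simpa using (tendsto_const_nhds (x := (1 : ℝ)) |>.sub tendsto_id).mono_left
        (nhdsWithin_le_nhds (s := Iio 1) (a := 1))
    · filter_upwards [self_mem_nhdsWithin] with t ht
      exact sub_pos.2 (mem_Iio.1 ht)
  exact (tendsto_nhdsWithin_of_tendsto_nhds tendsto_id).pos_mul_atTop one_pos
    hden.inv_tendsto_nhdsGT_zero

section TopExtension

variable {X : Type*}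

noncomputable def topExtension (s : Set X) (f : X → ℝ) (x : X) : EReal :=
  if x ∈ s then (f x : EReal) else ⊤

theorem topExtension_ne_bot (s : Set X) (f : X → ℝ) (x : X) : topExtension s f x ≠ ⊥ := by
  unfold topExtension; split_ifs <;> simp

theorem coe_mul_topExtension_ne_bot (s : Set X) (f : X → ℝ) (x : X) {c : ℝ} (hc : 0 ≤ c) :
    (c : EReal) * topExtension s f x ≠ ⊥ :=
  (EReal.mul_ne_bot _ _).2 ⟨Or.inl (EReal.coe_ne_bot c), Or.inr (topExtension_ne_bot s f x),
    Or.inl (EReal.coe_ne_top c), Or.inl (EReal.coe_nonneg.2 hc)⟩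

theorem coe_mul_topExtension_of_notMem {s : Set X} (f : X → ℝ) {x : X} (hx : x ∉ s) {c : ℝ}
    (hc : 0 < c) : (c : EReal) * topExtension s f x = ⊤ := by
  rw [topExtension, if_neg hx, EReal.coe_mul_top_of_pos hc]

theorem topExtension_convex_combination_le [AddCommMonoid X] [Module ℝ X] {s : Set X}
    {f : X → ℝ} (hf : ConvexOn ℝ s f) {x y : X} {a b : ℝ} (ha : 0 ≤ a) (hb : 0 ≤ b)
    (hab : a + b = 1) :
    topExtension s f (a • x + b • y) ≤ a * topExtension s f x + b * topExtension s f y := by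
  -- `0 * ⊤ = 0` in `EReal`, so a zero weight does not make the right-hand side infinite.
  rcases ha.eq_or_lt with rfl | ha
  · obtain rfl : b = 1 := by simpa using hab
    simp
  rcases hb.eq_or_lt with rfl | hb
  · obtain rfl : a = 1 := by simpa using hab
    simp
  by_cases hxy : x ∈ s ∧ y ∈ s
  · obtain ⟨hx, hy⟩ := hxy
    simp only [topExtension, hx, hy, hf.1 hx hy ha.le hb.le hab, if_true]
    exact_mod_cast hf.2 hx hy ha.le hb.le hab
  rcases not_and_or.1 hxy with hx | hy
  · rw [coe_mul_topExtension_of_notMem f hx ha,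
      EReal.top_add_of_ne_bot (coe_mul_topExtension_ne_bot s f y hb.le)]
    exact le_top
  · rw [coe_mul_topExtension_of_notMem f hy hb,
      EReal.add_top_of_ne_bot (coe_mul_topExtension_ne_bot s f x ha.le)]
    exact le_top

theorem lowerSemicontinuous_topExtension [TopologicalSpace X] {s : Set X} {f : X → ℝ}
    (hs : IsOpen s) (hf : ContinuousOn f s)
    (hbarrier : ∀ x ∉ s, Tendsto f (𝓝[s] x) atTop) :
    LowerSemicontinuous (topExtension s f) := by
  intro x
  by_cases hx : x ∈ s
  · refine ContinuousAt.lowerSemicontinuousAt ?_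
    have hfx : ContinuousAt (fun y => (f y : EReal)) x :=
      continuous_coe_real_ereal.continuousAt.comp (hf.continuousAt (hs.mem_nhds hx))
    refine hfx.congr ?_
    filter_upwards [hs.mem_nhds hx] with y hy
    simp [topExtension, hy]
  · intro M hM
    rw [topExtension, if_neg hx] at hM
    have hfM : ∀ᶠ y in 𝓝[s] x, M < f y :=
      (EReal.tendsto_coe_atTop.comp (hbarrier x hx)).eventually_const_lt hM
    filter_upwards [eventually_nhdsWithin_iff.1 hfM] with y hy
    by_cases hys : y ∈ s
    · simpa [topExtension, hys] using hy hys
    · simpa [topExtension, hys] using hM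

end TopExtension

section Gauge

variable {E : Type*} [AddCommGroup E] [Module ℝ E] {s : Set E}

theorem convexOn_gauge (hs : Convex ℝ s) (absorbs : Absorbent ℝ s) : ConvexOn ℝ univ (gauge s) :=
  ⟨convex_univ, fun x _ y _ a b ha hb _ => by
    simpa only [gauge_smul_of_nonneg ha, gauge_smul_of_nonneg hb, smul_eq_mul]
      using gauge_add_le hs absorbs (a • x) (b • y)⟩

variable [TopologicalSpace E] [ContinuousSMul ℝ E]

theorem convexOn_gauge_div_one_sub (hs : Convex ℝ s) (hs₀ : s ∈ 𝓝 0) (hs_open : IsOpen s) :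
    ConvexOn ℝ s (fun x => gauge s x / (1 - gauge s x)) := by
  refine ⟨hs, fun x hx y hy a b ha hb hab => ?_⟩
  have hx1 := gauge_lt_one_of_mem_of_isOpen hs_open hx
  have hy1 := gauge_lt_one_of_mem_of_isOpen hs_open hy
  have hcomb : a • gauge s x + b • gauge s y ∈ Iio 1 := convex_Iio 1 hx1 hy1 ha hb hab
  calc gauge s (a • x + b • y) / (1 - gauge s (a • x + b • y))
      ≤ (a • gauge s x + b • gauge s y) / (1 - (a • gauge s x + b • gauge s y)) :=
        strictMonoOn_div_one_sub.monotoneOn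
          (gauge_lt_one_of_mem_of_isOpen hs_open (hs hx hy ha hb hab)) hcomb
          ((convexOn_gauge hs (absorbent_nhds_zero hs₀)).2 trivial trivial ha hb hab)
    _ ≤ _ := convexOn_div_one_sub.2 hx1 hy1 ha hb hab

variable [IsTopologicalAddGroup E]

theorem continuousOn_gauge_div_one_sub (hs : Convex ℝ s) (hs₀ : s ∈ 𝓝 0) (hs_open : IsOpen s) :
    ContinuousOn (fun x => gauge s x / (1 - gauge s x)) s := by
  have hg := continuous_gauge hs hs₀
  exact hg.continuousOn.div (continuous_const.sub hg).continuousOn fun x hx =>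
    (sub_pos.2 (gauge_lt_one_of_mem_of_isOpen hs_open hx)).ne'

theorem tendsto_gauge_nhdsWithin_nhdsLT_one (hs : Convex ℝ s) (hs₀ : s ∈ 𝓝 0)
    (hs_open : IsOpen s) {x : E} (hx : x ∉ s) : Tendsto (gauge s) (𝓝[s] x) (𝓝[<] 1) := by
  have hx1 : 1 ≤ gauge s x :=
    one_le_gauge_of_notMem (hs.starConvex (mem_of_mem_nhds hs₀))
      (absorbent_nhds_zero hs₀).absorbs hx
  refine (nhdsLT_basis (1 : ℝ)).tendsto_right_iff.2 fun u hu => ?_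
  filter_upwards [nhdsWithin_le_nhds ((continuous_gauge hs hs₀).continuousAt.eventually_const_lt
    (hu.trans_le hx1)), self_mem_nhdsWithin] with y hy hys
  exact ⟨hy, gauge_lt_one_of_mem_of_isOpen hs_open hys⟩

end Gauge

theorem barrier_extension_convex_lsc_general {X : Type*} [NormedAddCommGroup X] [NormedSpace ℝ X]
    (U : Set X) (hU : IsOpen U) (hconv : Convex ℝ U)
    (h0 : (0:X) ∈ U)
    (kbar : X → EReal)
    (hkbar : ∀ x, kbar x = if x ∈ U then ((gauge U x / (1 - gauge U x) : ℝ) : EReal) else ⊤) :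
    LowerSemicontinuous kbar ∧
    (∀ x y : X, ∀ a b : ℝ, 0 ≤ a → 0 ≤ b → a + b = 1 →
      kbar (a • x + b • y) ≤ (a : EReal) * kbar x + (b : EReal) * kbar y) := by
  have hU0 : U ∈ 𝓝 0 := hU.mem_nhds h0
  obtain rfl : kbar = topExtension U (fun x => gauge U x / (1 - gauge U x)) := funext hkbar
  exact ⟨lowerSemicontinuous_topExtension hU (continuousOn_gauge_div_one_sub hconv hU0 hU)
      fun x hx => tendsto_div_one_sub_nhdsLT_one.comp
        (tendsto_gauge_nhdsWithin_nhdsLT_one hconv hU0 hU hx),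
    fun x y a b ha hb hab =>
      topExtension_convex_combination_le (convexOn_gauge_div_one_sub hconv hU0 hU) ha hb hab⟩

theorem barrier_extension_convex_lsc {X : Type*} [NormedAddCommGroup X] [NormedSpace ℝ X]
    (U : Set X) (hU : IsOpen U) (hconv : Convex ℝ U) (hbdd : Bornology.IsBounded U)
    (h0 : (0:X) ∈ U)
    (kbar : X → EReal)
    (hkbar : ∀ x, kbar x = if x ∈ U then ((gauge U x / (1 - gauge U x) : ℝ) : EReal) else ⊤) :
    LowerSemicontinuous kbar ∧
    (∀ x y : X, ∀ a b : ℝ, 0 ≤ a → 0 ≤ b → a + b = 1 →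
      kbar (a • x + b • y) ≤ (a : EReal) * kbar x + (b : EReal) * kbar y) :=
  barrier_extension_convex_lsc_general U hU hconv h0 kbar hkbar
end

section
/- Let X be a Banach space, f : X → ℝ ∪ {+∞} proper lower semicontinuous and bounded below on an open, convex, bounded set U with dom f ∩ U ≠ ∅, and let g : U → ℝ be convex, continuous, bounded below, with g(x) → +∞ as x → ∂U. Then inf_U (f+g) is finite, and for every ε > 0 there exists y ∈ U such that f(y) + g(y) < inf_U(f+g) + ε and the function x ↦ f(x) + g(x) + ε‖x − y‖ attains its minimum over U at y. -/
/-!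
Extend `f + g` by `⊤` outside `U`. Near `∂U` the barrier `g` blows up while `f` stays bounded
below, so the extension is lower semicontinuous on all of the complete space `X`, and Ekeland's
variational principle applies to it; since the extension is finite only on `U`, the point it
produces lies in `U`.

Ekeland's principle itself: starting from `x₀`, repeatedly pass to a near-minimiser of `h` on the
closed set `{z | h z + ε * dist z x ≤ h x}` of the current point `x`. These sets are nested and
their diameters tend to `0`, so they meet in a single point `y`, which admits no strictly better
point in its own set.
-/

open Metric Set Filter Topology

namespace Ekeland

variable {Y : Type*} [MetricSpace Y] {h : Y → ℝ} {ε : ℝ}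

variable (h ε) in
def descentSet (x : Y) : Set Y := {z | h z + ε * dist z x ≤ h x}

theorem self_mem_descentSet (x : Y) : x ∈ descentSet h ε x := by
  simp [descentSet]

theorem descentSet_subset_of_mem (hε : 0 ≤ ε) {x z : Y} (hz : z ∈ descentSet h ε x) :
    descentSet h ε z ⊆ descentSet h ε x := fun w hw => by
  have hz' : h z + ε * dist z x ≤ h x := hz
  have hw' : h w + ε * dist w z ≤ h z := hw
  show h w + ε * dist w x ≤ h x
  nlinarith [dist_triangle w z x]

theorem isClosed_descentSet (hh : LowerSemicontinuous h) (x : Y) :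
    IsClosed (descentSet h ε x) :=
  (hh.add (continuous_const.mul (continuous_id.dist continuous_const)).lowerSemicontinuous
    ).isClosed_preimage (h x)

theorem exists_mem_descentSet_subset_closedBall (hbdd : BddBelow (range h)) (hε : 0 < ε)
    (x : Y) {r : ℝ} (hr : 0 < r) :
    ∃ z ∈ descentSet h ε x, descentSet h ε z ⊆ closedBall z r := by
  obtain ⟨_, ⟨z, hz, rfl⟩, hz_lt⟩ := Real.lt_sInf_add_pos (s := h '' descentSet h ε x)
    ⟨h x, x, self_mem_descentSet x, rfl⟩ (mul_pos hε hr)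
  refine ⟨z, hz, fun w hw => ?_⟩
  have hw_ge : sInf (h '' descentSet h ε x) ≤ h w :=
    csInf_le (hbdd.mono (image_subset_range _ _))
      ⟨w, descentSet_subset_of_mem hε.le hz hw, rfl⟩
  have hw' : h w + ε * dist w z ≤ h z := hw
  rw [mem_closedBall]
  nlinarith

end Ekeland

open Ekeland in
/-- Ekeland's variational principle. -/
theorem LowerSemicontinuous.exists_le_forall_le_add_mul_dist {Y : Type*} [MetricSpace Y]
    [CompleteSpace Y] {h : Y → ℝ} (hh : LowerSemicontinuous h) (hbdd : BddBelow (range h))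
    {ε : ℝ} (hε : 0 < ε) (x₀ : Y) :
    ∃ y, h y ≤ h x₀ ∧ ∀ x, h y ≤ h x + ε * dist x y := by
  choose next next_mem next_subset using fun x (n : ℕ) =>
    exists_mem_descentSet_subset_closedBall hbdd hε x (Nat.one_div_pos_of_nat (n := n))
  obtain ⟨u, hu₀, hu⟩ : ∃ u : ℕ → Y, u 0 = x₀ ∧ ∀ n, u (n + 1) = next (u n) n :=
    ⟨fun n => Nat.rec x₀ (fun n x => next x n) n, rfl, fun _ => rfl⟩
  set s : ℕ → Set Y := fun n => descentSet h ε (u (n + 1))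
  have hs_anti : Antitone s := antitone_nat_of_succ_le fun n => by
    simp only [s, hu (n + 1)]
    exact descentSet_subset_of_mem hε.le (next_mem _ _)
  have hs_ball (n : ℕ) : s n ⊆ closedBall (u (n + 1)) (1 / (n + 1)) := by
    simp only [s, hu n]
    exact next_subset _ _
  have hs_diam : Tendsto (fun n => diam (s n)) atTop (𝓝 0) := by
    have hr : Tendsto (fun n : ℕ => 2 * (1 / ((n : ℝ) + 1))) atTop (𝓝 0) := by
      simpa using tendsto_one_div_add_atTop_nhds_zero_nat.const_mul (2 : ℝ)
    refine squeeze_zero (fun _ => diam_nonneg) (fun n => ?_) hr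
    exact (diam_mono (hs_ball n) isBounded_closedBall).trans (diam_closedBall (by positivity))
  obtain ⟨y, hy⟩ := nonempty_iInter_of_nonempty_biInter (s := s)
    (fun n => isClosed_descentSet hh _) (fun n => isBounded_closedBall.subset (hs_ball n))
    (fun N => ⟨u (N + 1), mem_iInter₂.2 fun n hn => hs_anti hn (self_mem_descentSet _)⟩) hs_diam
  rw [mem_iInter] at hy
  refine ⟨y, ?_, fun x => ?_⟩
  · have hy₀ : h y + ε * dist y x₀ ≤ h x₀ :=
      descentSet_subset_of_mem hε.le (hu₀ ▸ hu 0 ▸ next_mem (u 0) 0) (hy 0)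
    nlinarith [dist_nonneg (x := y) (y := x₀)]
  · by_contra! hlt
    have hx (n : ℕ) : x ∈ s n := descentSet_subset_of_mem hε.le (hy n) hlt.le
    have : x = y := eq_of_forall_dist_le fun r hr => by
      obtain ⟨n, hn⟩ := (hs_diam.eventually (gt_mem_nhds hr)).exists
      exact (dist_le_diam_of_mem (isBounded_closedBall.subset (hs_ball n)) (hx n) (hy n)).trans
        hn.le
    simp [this] at hlt

theorem LowerSemicontinuous.of_coe_ereal {α : Type*} [TopologicalSpace α] {h : α → ℝ}
    (hh : LowerSemicontinuous fun x => (h x : EReal)) : LowerSemicontinuous h :=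
  fun x c hc => (hh x c (EReal.coe_lt_coe_iff.2 hc)).mono fun _ => EReal.coe_lt_coe_iff.1

theorem LowerSemicontinuous.exists_le_forall_le_add_mul_dist_ereal {Y : Type*} [MetricSpace Y]
    [CompleteSpace Y] {H : Y → EReal} (hH : LowerSemicontinuous H) {m : ℝ}
    (hm : ∀ x, (m : EReal) ≤ H x) {ε : ℝ} (hε : 0 < ε) {x₀ : Y} (hx₀ : H x₀ ≠ ⊤) :
    ∃ y, H y ≤ H x₀ ∧ ∀ x, H y ≤ H x + ((ε * dist x y : ℝ) : EReal) := by
  -- `H` is finite on the closed sublevel set `D`, so the real-valued principle applies there.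
  let D : Set Y := {x | H x ≤ H x₀}
  have : CompleteSpace D := (hH.isClosed_preimage (H x₀)).completeSpace_coe
  let h : D → ℝ := fun x => (H x).toReal
  have hh (x : D) : (h x : EReal) = H x :=
    EReal.coe_toReal (ne_top_of_le_ne_top hx₀ x.2)
      (ne_bot_of_le_ne_bot (EReal.coe_ne_bot m) (hm x))
  have hh_lsc : LowerSemicontinuous h :=
    .of_coe_ereal ((funext hh : _ = H ∘ Subtype.val) ▸ hH.comp continuous_subtype_val)
  have hh_bdd : BddBelow (range h) :=
    ⟨m, forall_mem_range.2 fun x => EReal.coe_le_coe_iff.1 ((hh x).symm ▸ hm x)⟩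
  obtain ⟨y, hy₀, hy⟩ := hh_lsc.exists_le_forall_le_add_mul_dist hh_bdd hε ⟨x₀, le_refl (H x₀)⟩
  have hy₀' : H y ≤ H x₀ := by simpa only [hh] using EReal.coe_le_coe_iff.2 hy₀
  refine ⟨y, hy₀', fun x => ?_⟩
  by_cases hx : x ∈ D
  · have := EReal.coe_le_coe_iff.2 (hy ⟨x, hx⟩)
    rwa [EReal.coe_add, hh, hh, Subtype.dist_eq] at this
  · exact (hy₀'.trans (le_of_not_ge hx)).trans
      (le_add_of_nonneg_right (EReal.coe_nonneg.2 (by positivity)))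

theorem LowerSemicontinuous.exists_mem_le_forall_le_add_mul_dist_of_piecewise_top {Y : Type*}
    [MetricSpace Y] [CompleteSpace Y] {U : Set Y} [DecidablePred (· ∈ U)] {F : Y → EReal}
    (hF : LowerSemicontinuous (U.piecewise F ⊤)) {m : ℝ} (hm : ∀ x ∈ U, (m : EReal) ≤ F x)
    {ε : ℝ} (hε : 0 < ε) {x₀ : Y} (hx₀U : x₀ ∈ U) (hx₀ : F x₀ ≠ ⊤) :
    ∃ y ∈ U, F y ≤ F x₀ ∧ ∀ x ∈ U, F y ≤ F x + ((ε * dist x y : ℝ) : EReal) := by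
  have hm' (x : Y) : (m : EReal) ≤ U.piecewise F ⊤ x := by
    by_cases hx : x ∈ U
    · simpa [hx] using hm x hx
    · simp [hx]
  obtain ⟨y, hy₀, hy⟩ := hF.exists_le_forall_le_add_mul_dist_ereal hm' hε
    (x₀ := x₀) (by rwa [piecewise_eq_of_mem _ _ _ hx₀U])
  rw [piecewise_eq_of_mem _ _ _ hx₀U] at hy₀
  have hyU : y ∈ U := by
    by_contra hyU
    rw [piecewise_eq_of_notMem _ _ _ hyU, Pi.top_apply, top_le_iff] at hy₀
    exact hx₀ hy₀
  rw [piecewise_eq_of_mem _ _ _ hyU] at hy₀ hy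
  exact ⟨y, hyU, hy₀, fun x hx => by simpa [hx] using hy x⟩

theorem lowerSemicontinuous_piecewise_top {α β : Type*} [TopologicalSpace α]
    [TopologicalSpace β] [LinearOrder β] [OrderTop β] [OrderTopology β] {U : Set α}
    [DecidablePred (· ∈ U)] {F : α → β} (hU : IsOpen U) (hF : ∀ x ∈ U, LowerSemicontinuousAt F x)
    (hF_frontier : ∀ x ∈ frontier U, Tendsto F (𝓝[U] x) (𝓝 ⊤)) :
    LowerSemicontinuous (U.piecewise F ⊤) := by
  intro x c hc
  by_cases hxU : x ∈ U
  · rw [piecewise_eq_of_mem _ _ _ hxU] at hc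
    filter_upwards [hF x hxU c hc, hU.mem_nhds hxU] with z hz hzU
    rwa [piecewise_eq_of_mem _ _ _ hzU]
  have hc_top : c < ⊤ := hc.trans_le le_top
  have hU_ev : ∀ᶠ z in 𝓝 x, z ∈ U → c < F z := by
    by_cases hx_cl : x ∈ closure U
    · exact eventually_nhdsWithin_iff.1
        ((hF_frontier x (hU.frontier_eq ▸ ⟨hx_cl, hxU⟩)).eventually (Ioi_mem_nhds hc_top))
    · exact eventually_nhdsWithin_iff.1 (by simp [notMem_closure_iff_nhdsWithin_eq_bot.1 hx_cl])
  filter_upwards [hU_ev] with z hz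
  by_cases hzU : z ∈ U
  · rw [piecewise_eq_of_mem _ _ _ hzU]; exact hz hzU
  · rwa [piecewise_eq_of_notMem _ _ _ hzU]

theorem tendsto_nhdsWithin_atTop_of_infDist_frontier {X : Type*} [PseudoMetricSpace X]
    {U : Set X} {g : X → ℝ}
    (hg : ∀ M : ℝ, ∃ δ > 0, ∀ x ∈ U, infDist x (frontier U) < δ → M < g x)
    {x : X} (hx : x ∈ frontier U) : Tendsto g (𝓝[U] x) atTop := by
  refine tendsto_atTop.2 fun M => ?_
  obtain ⟨δ, hδ, hgδ⟩ := hg M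
  filter_upwards [self_mem_nhdsWithin, mem_nhdsWithin_of_mem_nhds (ball_mem_nhds x hδ)]
    with z hzU hz
  exact (hgδ z hzU ((infDist_le_dist_of_mem hx).trans_lt hz)).le

theorem lowerSemicontinuous_piecewise_add_barrier_top {X : Type*} [PseudoMetricSpace X]
    {U : Set X} [DecidablePred (· ∈ U)] (hU : IsOpen U) {f : X → EReal}
    (hf : LowerSemicontinuous f) {m : ℝ} (hm : ∀ x ∈ U, (m : EReal) ≤ f x) {g : X → ℝ}
    (hg : ContinuousOn g U)
    (hg_barrier : ∀ M : ℝ, ∃ δ > 0, ∀ x ∈ U, infDist x (frontier U) < δ → M < g x) :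
    LowerSemicontinuous (U.piecewise (fun x => f x + (g x : EReal)) ⊤) := by
  refine lowerSemicontinuous_piecewise_top hU (fun x hx => ?_) (fun x hx => ?_)
  · exact (hf.lowerSemicontinuousAt x).add'
      (continuous_coe_real_ereal.continuousAt.comp (hg.continuousAt (hU.mem_nhds hx))
        ).lowerSemicontinuousAt
      (EReal.continuousAt_add (.inr (EReal.coe_ne_bot _))
        (.inl (ne_bot_of_le_ne_bot (EReal.coe_ne_bot m) (hm x hx))))
  · have hg_top : Tendsto (fun z => ((m + g z : ℝ) : EReal)) (𝓝[U] x) (𝓝 ⊤) :=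
      EReal.tendsto_coe_nhds_top_iff.2 (tendsto_atTop_add_const_left _ m
        (tendsto_nhdsWithin_atTop_of_infDist_frontier hg_barrier hx))
    refine tendsto_nhds_top_mono hg_top ?_
    filter_upwards [self_mem_nhdsWithin] with z hz
    rw [EReal.coe_add]
    exact add_le_add_left (hm z hz) _

theorem ekeland_with_barrier_general {X : Type*} [NormedAddCommGroup X]
    [CompleteSpace X]
    (f : X → EReal) (hf : LowerSemicontinuous f)
    (U : Set X) (hUo : IsOpen U)
    (hfb : ∃ m : ℝ, ∀ x ∈ U, (m : EReal) ≤ f x)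
    (hdom : ∃ x ∈ U, f x ≠ ⊤)
    (g : X → ℝ) (hgcont : ContinuousOn g U)
    (hgb : BddBelow (g '' U))
    (hbar : ∀ M : ℝ, ∃ δ > 0, ∀ x ∈ U, Metric.infDist x (frontier U) < δ → M < g x) :
    sInf ((fun x => f x + ((g x : ℝ) : EReal)) '' U) ≠ ⊤ ∧
    sInf ((fun x => f x + ((g x : ℝ) : EReal)) '' U) ≠ ⊥ ∧
    ∀ ε > (0:ℝ), ∃ y ∈ U,
      f y + ((g y : ℝ) : EReal) < sInf ((fun x => f x + ((g x : ℝ) : EReal)) '' U) + (ε : EReal) ∧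
      ∀ x ∈ U, f y + ((g y : ℝ) : EReal) ≤ f x + ((g x : ℝ) : EReal) + ((ε * ‖x - y‖ : ℝ) : EReal) := by
  classical
  obtain ⟨mf, hmf⟩ := hfb
  obtain ⟨mg, hmg⟩ := hgb
  set F : X → EReal := fun x => f x + ((g x : ℝ) : EReal)
  have hF_lb (x : X) (hx : x ∈ U) : ((mf + mg : ℝ) : EReal) ≤ F x := by
    rw [EReal.coe_add]
    exact add_le_add (hmf x hx) (EReal.coe_le_coe_iff.2 (hmg ⟨x, hx, rfl⟩))
  obtain ⟨x₁, hx₁U, hx₁⟩ := hdom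
  have hA_top : sInf (F '' U) ≠ ⊤ := ne_top_of_le_ne_top
    (EReal.add_lt_top hx₁ (EReal.coe_ne_top _)).ne (sInf_le (mem_image_of_mem F hx₁U))
  have hA_bot : sInf (F '' U) ≠ ⊥ :=
    ne_bot_of_le_ne_bot (EReal.coe_ne_bot _) (le_sInf (forall_mem_image.2 hF_lb))
  refine ⟨hA_top, hA_bot, fun ε hε => ?_⟩
  have hA_lt : sInf (F '' U) < sInf (F '' U) + ε := by
    lift sInf (F '' U) to ℝ using ⟨hA_top, hA_bot⟩ with a
    exact_mod_cast lt_add_of_pos_right a hε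
  obtain ⟨_, ⟨x₀, hx₀U, rfl⟩, hx₀⟩ := sInf_lt_iff.1 hA_lt
  obtain ⟨y, hyU, hy₀, hy⟩ :=
    (lowerSemicontinuous_piecewise_add_barrier_top hUo hf hmf hgcont hbar
      ).exists_mem_le_forall_le_add_mul_dist_of_piecewise_top hF_lb hε hx₀U
      (hx₀.trans_le le_top).ne
  exact ⟨y, hyU, hy₀.trans_lt hx₀, fun x hx => by simpa [dist_eq_norm] using hy x hx⟩

theorem ekeland_with_barrier {X : Type*} [NormedAddCommGroup X] [NormedSpace ℝ X]
    [CompleteSpace X]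
    (f : X → EReal) (hf : LowerSemicontinuous f) (hfbot : ∀ x, f x ≠ ⊥)
    (U : Set X) (hUo : IsOpen U) (hUc : Convex ℝ U) (hUb : Bornology.IsBounded U)
    (hfb : ∃ m : ℝ, ∀ x ∈ U, (m : EReal) ≤ f x)
    (hdom : ∃ x ∈ U, f x ≠ ⊤)
    (g : X → ℝ) (hgc : ConvexOn ℝ U g) (hgcont : ContinuousOn g U)
    (hgb : BddBelow (g '' U))
    (hbar : ∀ M : ℝ, ∃ δ > 0, ∀ x ∈ U, Metric.infDist x (frontier U) < δ → M < g x) :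
    sInf ((fun x => f x + ((g x : ℝ) : EReal)) '' U) ≠ ⊤ ∧
    sInf ((fun x => f x + ((g x : ℝ) : EReal)) '' U) ≠ ⊥ ∧
    ∀ ε > (0:ℝ), ∃ y ∈ U,
      f y + ((g y : ℝ) : EReal) < sInf ((fun x => f x + ((g x : ℝ) : EReal)) '' U) + (ε : EReal) ∧
      ∀ x ∈ U, f y + ((g y : ℝ) : EReal) ≤ f x + ((g x : ℝ) : EReal) + ((ε * ‖x - y‖ : ℝ) : EReal) :=
  ekeland_with_barrier_general f hf U hUo hfb hdom g hgcont hgb hbar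
end

section
/- Let X be a Banach space, let ∂ be a feasible subdifferential, and let f : X → ℝ ∪ {+∞} be proper and lower semicontinuous. Suppose (x₀, x₀*) ∈ X × X* is monotonically related to ∂f, i.e., ⟨x* − x₀*, x − x₀⟩ ≥ 0 for all (x, x*) in the graph of ∂f. Then x₀ ∈ dom f and x₀* belongs to the Fenchel subdifferential of f at x₀, i.e., f(y) ≥ f(x₀) + ⟨x₀*, y − x₀⟩ for all y ∈ X. -/
open Filter Topology

/-- Convexity for `EReal`-valued functions on a set. -/
def ERealConvexOn {X : Type*} [AddCommGroup X] [Module ℝ X]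
    (U : Set X) (f : X → EReal) : Prop :=
  ∀ x ∈ U, ∀ y ∈ U, ∀ a b : ℝ, 0 ≤ a → 0 ≤ b → a + b = 1 →
    f (a • x + b • y) ≤ (a : EReal) * f x + (b : EReal) * f y

/-- The Fenchel (convex) subdifferential of an `EReal`-valued function relative to a set `U`. -/
def FenchelSubdiffOn {X : Type*} [NormedAddCommGroup X] [NormedSpace ℝ X]
    (f : X → EReal) (U : Set X) (x : X) : Set (X →L[ℝ] ℝ) :=
  {p | ∀ y ∈ U, f x + ((p (y - x) : ℝ) : EReal) ≤ f y}

/-- A feasible subdifferential in the sense of Ivanov–Zlateva: a map assigning to each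
extended-real-valued function and point a set of continuous linear functionals, satisfying
(P1) agreement with the Fenchel subdifferential on convex continuous functions, and
(P2) a fuzzy variational sum rule at local minima of `f + g` with `g` convex continuous. -/
structure FeasibleSubdifferential (X : Type*) [NormedAddCommGroup X] [NormedSpace ℝ X] where
  D : (X → EReal) → X → Set (X →L[ℝ] ℝ)
  P1 : ∀ (f : X → EReal) (x : X) (U : Set X), IsOpen U → x ∈ U → Convex ℝ U →
      ERealConvexOn U f → ContinuousOn f U → (∀ y ∈ U, f y ≠ ⊤ ∧ f y ≠ ⊥) →
      D f x = FenchelSubdiffOn f U x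
  P2 : ∀ (f g : X → EReal) (x : X) (V : Set X), LowerSemicontinuous f → f x ≠ ⊤ →
      IsOpen V → x ∈ V → Convex ℝ V → ERealConvexOn V g → ContinuousOn g V →
      (∀ y ∈ V, g y ≠ ⊤ ∧ g y ≠ ⊥) →
      IsLocalMin (fun y => f y + g y) x →
      ∃ (y : ℕ → X) (ys : ℕ → X →L[ℝ] ℝ) (ystar : X →L[ℝ] ℝ),
        Tendsto y atTop (𝓝 x) ∧ Tendsto (fun n => f (y n)) atTop (𝓝 (f x)) ∧
        (∀ n, ys n ∈ D f (y n)) ∧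
        (∀ v : X, Tendsto (fun n => ys n v) atTop (𝓝 (ystar v))) ∧
        -ystar ∈ FenchelSubdiffOn g V x

open Metric

private lemma ereal_sub_lt' (B : EReal) (a c : ℝ) (h : (a : EReal) < B + (c : EReal)) :
    ((a - c : ℝ) : EReal) < B := by
  by_contra hc
  push_neg at hc
  have : B + (c : EReal) ≤ ((a - c : ℝ) : EReal) + (c : EReal) := add_le_add_left hc _
  rw [← EReal.coe_add, sub_add_cancel] at this
  exact absurd (lt_of_lt_of_le h this) (lt_irrefl _)

private lemma lscAt_add_cont' {X : Type*} [TopologicalSpace X] {f : X → EReal} {q : X → ℝ} {x : X}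
    (hf : LowerSemicontinuousAt f x) (hbot : ∀ y, f y ≠ ⊥) (hq : ContinuousAt q x) :
    LowerSemicontinuousAt (fun y => f y + (q y : EReal)) x := by
  intro b hb'
  induction b using EReal.rec with
  | bot =>
    filter_upwards with y
    have : f y + (q y : EReal) ≠ ⊥ := by
      intro h
      rcases EReal.add_eq_bot_iff.1 h with h' | h'
      · exact hbot y h'
      · exact EReal.coe_ne_bot _ h'
    exact bot_lt_iff_ne_bot.2 this
  | top => exact absurd hb' (not_lt.2 le_top)
  | coe b =>
    have h1 : ((b - q x : ℝ) : EReal) < f x := ereal_sub_lt' _ _ _ hb'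
    obtain ⟨γ, hγ1, hγ2⟩ := EReal.exists_between_coe_real h1
    have hγ1' : b - q x < γ := EReal.coe_lt_coe_iff.1 hγ1
    have E1 := hf (γ : EReal) hγ2
    have E2 : ∀ᶠ y in 𝓝 x, |q y - q x| < γ - (b - q x) := by
      have := Metric.tendsto_nhds.1 hq (γ - (b - q x)) (by linarith)
      simpa [Real.dist_eq] using this
    filter_upwards [E1, E2] with y hy1 hy2
    have : (b : EReal) < ((γ + q y : ℝ) : EReal) := by
      rw [EReal.coe_lt_coe_iff]
      have := abs_lt.1 hy2
      linarith [this.1]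
    refine lt_of_lt_of_le this ?_
    rw [EReal.coe_add]
    exact add_le_add_left hy1.le _

theorem ekeland_EReal' {Y : Type*} [MetricSpace Y] [CompleteSpace Y]
    (Ψ : Y → EReal) (hlsc : LowerSemicontinuous Ψ) (μ : ℝ)
    (hbd : ∀ x, (μ : EReal) ≤ Ψ x) {ε : ℝ} (hε : 0 < ε)
    (s : Y) (hs : Ψ s ≠ ⊤) :
    ∃ v : Y, Ψ v ≤ Ψ s ∧ ∀ x, Ψ v ≤ Ψ x + ((ε * dist x v : ℝ) : EReal) := by
  have hnb : ∀ x, Ψ x ≠ ⊥ := fun x h => by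
    have := hbd x; rw [h, le_bot_iff] at this; exact EReal.coe_ne_bot μ this
  -- step existence
  have hstep : ∀ (n : ℕ) (z : Y), ∃ x' : Y,
      Ψ z ≠ ⊤ → (Ψ x' + ((ε * dist x' z : ℝ) : EReal) ≤ Ψ z ∧
        ∀ u, Ψ u + ((ε * dist u z : ℝ) : EReal) ≤ Ψ z →
          Ψ x' ≤ Ψ u + ((1 / (n + 1) : ℝ) : EReal)) := by
    intro n z
    by_cases hz : Ψ z = ⊤
    · exact ⟨z, fun h => absurd hz h⟩
    set S : Set Y := {u | Ψ u + ((ε * dist u z : ℝ) : EReal) ≤ Ψ z} with hSdef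
    have hzS : z ∈ S := by
      simp only [hSdef, Set.mem_setOf_eq, dist_self, mul_zero, EReal.coe_zero, add_zero, le_refl]
    set I : EReal := sInf (Ψ '' S) with hI
    have hIle : I ≤ Ψ z := sInf_le ⟨z, hzS, rfl⟩
    have hIge : (μ : EReal) ≤ I := le_sInf (by rintro e ⟨u, _, rfl⟩; exact hbd u)
    have hInet : I ≠ ⊤ := fun h => hz (top_le_iff.1 (h ▸ hIle))
    have hIneb : I ≠ ⊥ := fun h => by
      rw [h, le_bot_iff] at hIge; exact EReal.coe_ne_bot μ hIge
    have hpos : (0:ℝ) < 1 / (n + 1) := by positivity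
    have hlt : I < I + ((1 / (n + 1) : ℝ) : EReal) := by
      rw [← EReal.coe_toReal hInet hIneb, ← EReal.coe_add]
      exact EReal.coe_lt_coe_iff.2 (by linarith)
    have hlt' : sInf (Ψ '' S) < I + ((1 / (n + 1) : ℝ) : EReal) := by rw [← hI]; exact hlt
    obtain ⟨e, heS, hu'lt⟩ := sInf_lt_iff.1 hlt'
    obtain ⟨u', hu'S, rfl⟩ := heS
    refine ⟨u', fun _ => ⟨hu'S, fun u huS => ?_⟩⟩
    calc Ψ u' ≤ I + ((1 / (n + 1) : ℝ) : EReal) := hu'lt.le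
      _ ≤ Ψ u + ((1 / (n + 1) : ℝ) : EReal) := add_le_add_left (sInf_le (Set.mem_image_of_mem Ψ huS)) _
  choose step hstepP using hstep
  set x : ℕ → Y := fun n => Nat.rec s (fun k ih => step k ih) n with hxdef
  have hx0 : x 0 = s := rfl
  have hxsucc : ∀ n, x (n + 1) = step n (x n) := fun n => rfl
  have hne : ∀ n, Ψ (x n) ≠ ⊤ := by
    intro n
    induction n with
    | zero => exact hs
    | succ k ih =>
      have h1 := (hstepP k (x k) ih).1
      rw [← hxsucc k] at h1
      intro htop
      rw [htop] at h1
      have h2 : (⊤ : EReal) ≤ (⊤ : EReal) + ((ε * dist (x (k+1)) (x k) : ℝ) : EReal) :=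
        le_add_of_nonneg_right (EReal.coe_nonneg.2 (by positivity))
      exact ih (top_le_iff.1 (le_trans h2 h1))
  have hdec : ∀ n, Ψ (x (n+1)) + ((ε * dist (x (n+1)) (x n) : ℝ) : EReal) ≤ Ψ (x n) := by
    intro n
    have := (hstepP n (x n) (hne n)).1
    rwa [← hxsucc n] at this
  have hchoice : ∀ n, ∀ u, Ψ u + ((ε * dist u (x n) : ℝ) : EReal) ≤ Ψ (x n) →
      Ψ (x (n+1)) ≤ Ψ u + ((1 / (n + 1) : ℝ) : EReal) := by
    intro n u hu
    have := (hstepP n (x n) (hne n)).2 u hu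
    rwa [← hxsucc n] at this
  -- chain inequality
  have hchain : ∀ n m, n ≤ m → Ψ (x m) + ((ε * dist (x m) (x n) : ℝ) : EReal) ≤ Ψ (x n) := by
    intro n m hnm
    induction m, hnm using Nat.le_induction with
    | base => simp [dist_self]
    | succ m hnm ih =>
      have h1 := hdec m
      have htri : ε * dist (x (m+1)) (x n) ≤ ε * dist (x (m+1)) (x m) + ε * dist (x m) (x n) := by
        rw [← mul_add]
        exact mul_le_mul_of_nonneg_left (dist_triangle _ _ _) hε.le
      calc Ψ (x (m+1)) + ((ε * dist (x (m+1)) (x n) : ℝ) : EReal)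
          ≤ Ψ (x (m+1)) + ((ε * dist (x (m+1)) (x m) + ε * dist (x m) (x n) : ℝ) : EReal) := by
            exact add_le_add_right (EReal.coe_le_coe_iff.2 htri) _
        _ = (Ψ (x (m+1)) + ((ε * dist (x (m+1)) (x m) : ℝ) : EReal))
              + ((ε * dist (x m) (x n) : ℝ) : EReal) := by
            rw [EReal.coe_add, add_assoc]
        _ ≤ Ψ (x m) + ((ε * dist (x m) (x n) : ℝ) : EReal) := add_le_add_left h1 _
        _ ≤ Ψ (x n) := ih
  -- real values
  set v : ℕ → ℝ := fun n => (Ψ (x n)).toReal with hvdef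
  have hv : ∀ n, ((v n : ℝ) : EReal) = Ψ (x n) := fun n =>
    EReal.coe_toReal (hne n) (hnb (x n))
  have hvchain : ∀ n m, n ≤ m → ε * dist (x m) (x n) ≤ v n - v m := by
    intro n m hnm
    have := hchain n m hnm
    rw [← hv n, ← hv m, ← EReal.coe_add, EReal.coe_le_coe_iff] at this
    linarith
  have hvanti : Antitone v := antitone_nat_of_succ_le fun n => by
    have := hvchain n (n+1) (Nat.le_succ n)
    have hd : 0 ≤ ε * dist (x (n+1)) (x n) := by positivity
    linarith
  have hvbdd : ∀ n, μ ≤ v n := fun n => by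
    have := hbd (x n); rw [← hv n, EReal.coe_le_coe_iff] at this; exact this
  set L : ℝ := ⨅ n, v n with hLdef
  have hBdd : BddBelow (Set.range v) := ⟨μ, by rintro _ ⟨n, rfl⟩; exact hvbdd n⟩
  have htendv : Tendsto v atTop (𝓝 L) := tendsto_atTop_ciInf hvanti hBdd
  have hLle : ∀ n, L ≤ v n := fun n => ciInf_le hBdd n
  -- Cauchy
  have hcauchy : CauchySeq x := by
    apply cauchySeq_of_le_tendsto_0 (fun N => (v N - L) / ε) _ _
    · intro n m N hNn hNm
      rcases le_total n m with h | h
      · have := hvchain n m h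
        have h2 : v n ≤ v N := hvanti hNn
        have h3 : L ≤ v m := hLle m
        rw [dist_comm]
        rw [le_div_iff₀ hε]
        nlinarith
      · have := hvchain m n h
        have h2 : v m ≤ v N := hvanti hNm
        have h3 : L ≤ v n := hLle n
        rw [le_div_iff₀ hε]
        nlinarith
    · have : Tendsto (fun N => v N - L) atTop (𝓝 (L - L)) := htendv.sub_const L
      rw [sub_self] at this
      simpa using this.div_const ε
  obtain ⟨xb, hxb⟩ := cauchySeq_tendsto_of_complete hcauchy
  -- claim A
  have hA : ∀ n, Ψ xb + ((ε * dist xb (x n) : ℝ) : EReal) ≤ Ψ (x n) := by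
    intro n
    by_contra hcon
    push_neg at hcon
    rw [← hv n] at hcon
    have h1 : ((v n - ε * dist xb (x n) : ℝ) : EReal) < Ψ xb := by
      apply ereal_sub_lt' _ _ _ _
      rw [add_comm] at hcon ⊢
      exact hcon
    obtain ⟨t, ht1, ht2⟩ := EReal.exists_between_coe_real h1
    set δ : ℝ := t - (v n - ε * dist xb (x n)) with hδdef
    have hδ : 0 < δ := by
      have := EReal.coe_lt_coe_iff.1 ht1; linarith
    have E1 : ∀ᶠ m in atTop, (t : EReal) < Ψ (x m) := hxb.eventually (hlsc xb t ht2)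
    have E2 : Tendsto (fun m => dist (x m) (x n)) atTop (𝓝 (dist xb (x n))) :=
      hxb.dist tendsto_const_nhds
    have E2' : ∀ᶠ m in atTop, |dist (x m) (x n) - dist xb (x n)| < δ / ε := by
      have := Metric.tendsto_nhds.1 E2 (δ / ε) (by positivity)
      simpa [Real.dist_eq] using this
    have E3 : ∀ᶠ m in atTop, n ≤ m := eventually_ge_atTop n
    obtain ⟨m, hm1, hm2, hm3⟩ := (E1.and (E2'.and E3)).exists
    have hchain' := hvchain n m hm3
    have hvm : t < v m := by
      have := hm1; rw [← hv m, EReal.coe_lt_coe_iff] at this; exact this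
    have habs := abs_lt.1 hm2
    have : ε * dist (x m) (x n) > ε * dist xb (x n) - δ := by
      have : dist (x m) (x n) > dist xb (x n) - δ / ε := by linarith [habs.1]
      calc ε * dist (x m) (x n) > ε * (dist xb (x n) - δ / ε) :=
            (mul_lt_mul_iff_right₀ hε).2 this
        _ = ε * dist xb (x n) - δ := by rw [mul_sub, mul_div_cancel₀ _ hε.ne']
    linarith
  refine ⟨xb, ?_, ?_⟩
  · have := hA 0
    rw [hx0] at this
    exact le_trans (le_add_of_nonneg_right (EReal.coe_nonneg.2 (by positivity))) this
  · intro u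
    by_contra hu
    push_neg at hu
    have hunet : Ψ u ≠ ⊤ := by
      intro h
      rw [h, EReal.top_add_coe] at hu
      exact absurd hu (not_lt.2 le_top)
    have huS : ∀ n, Ψ u + ((ε * dist u (x n) : ℝ) : EReal) ≤ Ψ (x n) := by
      intro n
      have htri : ε * dist u (x n) ≤ ε * dist u xb + ε * dist xb (x n) := by
        rw [← mul_add]; exact mul_le_mul_of_nonneg_left (dist_triangle _ _ _) hε.le
      calc Ψ u + ((ε * dist u (x n) : ℝ) : EReal)
          ≤ Ψ u + ((ε * dist u xb + ε * dist xb (x n) : ℝ) : EReal) :=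
            add_le_add_right (EReal.coe_le_coe_iff.2 htri) _
        _ = (Ψ u + ((ε * dist u xb : ℝ) : EReal)) + ((ε * dist xb (x n) : ℝ) : EReal) := by
            rw [EReal.coe_add, add_assoc]
        _ ≤ Ψ xb + ((ε * dist xb (x n) : ℝ) : EReal) := add_le_add_left hu.le _
        _ ≤ Ψ (x n) := hA n
    -- Ψ xb ≤ Ψ u + 1/(n+1) for all n
    have hkey : ∀ n : ℕ, Ψ xb ≤ Ψ u + ((1 / (n + 1) : ℝ) : EReal) := by
      intro n
      have h1 := hchoice n u (huS n)
      have h2 : Ψ xb ≤ Ψ (x (n+1)) :=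
        le_trans (le_add_of_nonneg_right (EReal.coe_nonneg.2 (by positivity)))
          (hA (n+1))
      exact le_trans h2 h1
    have huneb : Ψ u ≠ ⊥ := hnb u
    set α : ℝ := (Ψ u).toReal with hα
    have hcoeu : ((α : ℝ) : EReal) = Ψ u := EReal.coe_toReal hunet huneb
    have hxbnet : Ψ xb ≠ ⊤ := by
      intro h
      have := hkey 0
      rw [h, ← hcoeu, ← EReal.coe_add, top_le_iff] at this
      exact EReal.coe_ne_top _ this
    set β : ℝ := (Ψ xb).toReal with hβ
    have hcoexb : ((β : ℝ) : EReal) = Ψ xb := EReal.coe_toReal hxbnet (hnb xb)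
    have hβα : β ≤ α := by
      by_contra hc
      push_neg at hc
      obtain ⟨n, hn⟩ := exists_nat_one_div_lt (sub_pos.2 hc)
      have := hkey n
      rw [← hcoexb, ← hcoeu, ← EReal.coe_add, EReal.coe_le_coe_iff] at this
      have : (1:ℝ) / (n + 1) < 1 / (n+1) := by
        calc (1:ℝ)/(n+1) ≥ β - α := by linarith
          _ > 1/(n+1) := by linarith [hn]
      exact absurd this (lt_irrefl _)
    -- contradiction
    rcases eq_or_ne u xb with rfl | hne'
    · rw [dist_self, mul_zero] at hu
      simp at hu
    · have hd : 0 < dist u xb := dist_pos.2 hne'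
      have : Ψ u + ((ε * dist u xb : ℝ) : EReal) < Ψ u := lt_of_lt_of_le hu (by
        rw [← hcoexb, ← hcoeu, EReal.coe_le_coe_iff]; exact hβα)
      rw [← hcoeu, ← EReal.coe_add, EReal.coe_lt_coe_iff] at this
      nlinarith

set_option maxHeartbeats 2000000 in
private lemma key {X : Type*} [NormedAddCommGroup X] [NormedSpace ℝ X] [CompleteSpace X]
    (D : FeasibleSubdifferential X)
    (f : X → EReal) (hfbot : ∀ x, f x ≠ ⊥) (hflsc : LowerSemicontinuous f)
    (x₀ : X) (x₀s : X →L[ℝ] ℝ)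
    (hmon : ∀ x : X, ∀ xs ∈ D.D f x, 0 ≤ xs (x - x₀) - x₀s (x - x₀))
    (y₁ : X)
    (hy : f y₁ + ((-(x₀s (y₁ - x₀)) : ℝ) : EReal) < f x₀ + ((-(x₀s (x₀ - x₀)) : ℝ) : EReal)) :
    False := by
  classical
  set φ : X → ℝ := fun y => x₀s (y - x₀) with hφdef
  set F : X → EReal := fun y => f y + ((-(φ y) : ℝ) : EReal) with hFdef
  have hφc : Continuous φ := x₀s.continuous.comp (continuous_id.sub continuous_const)
  have hFlsc : LowerSemicontinuous F := fun z =>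
    lscAt_add_cont' (hflsc z) hfbot ((hφc.neg).continuousAt)
  have hFbot : ∀ y, F y ≠ ⊥ := by
    intro y h
    rw [hFdef] at h
    simp only at h
    rcases EReal.add_eq_bot_iff.1 h with h' | h'
    · exact hfbot y h'
    · exact EReal.coe_ne_bot _ h'
  have hy' : F y₁ < F x₀ := by simp only [hFdef, hφdef]; exact hy
  have hFy₁top : F y₁ ≠ ⊤ := ne_top_of_lt hy'
  set β : ℝ := (F y₁).toReal with hβdef
  have hβ : ((β : ℝ) : EReal) = F y₁ := EReal.coe_toReal hFy₁top (hFbot y₁)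
  obtain ⟨c, hc1, hc2⟩ := EReal.exists_between_coe_real hy'
  have hβc : β < c := by rw [← hβ, EReal.coe_lt_coe_iff] at hc1; exact hc1
  -- ball around x₀ where F ≥ c
  obtain ⟨ρ₁, hρ₁pos, hball⟩ := Metric.eventually_nhds_iff_ball.1 (hFlsc x₀ (c : EReal) hc2)
  -- r
  have hy₁ne : y₁ ≠ x₀ := fun h => absurd (h ▸ hy') (lt_irrefl _)
  set r : ℝ := ‖y₁ - x₀‖ with hrdef
  have hr : 0 < r := by
    rw [hrdef]; exact norm_pos_iff.2 (sub_ne_zero.2 hy₁ne)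
  -- segment
  set seg : Set X := segment ℝ x₀ y₁ with hsegdef
  have hsegne : seg.Nonempty := ⟨x₀, left_mem_segment ℝ x₀ y₁⟩
  have hsegconv : Convex ℝ seg := convex_segment _ _
  have hsegcpt : IsCompact seg := by
    rw [hsegdef, segment_eq_image ℝ x₀ y₁]
    exact isCompact_Icc.image (by continuity)
  -- tube lower bound
  have htube : ∃ w > 0, ∃ μ : ℝ, μ ≤ c ∧ ∀ z, infDist z seg < w → (μ : EReal) ≤ F z := by
    set U : ℕ → Set X := fun n => {z | (((-(n : ℝ) : ℝ)) : EReal) < F z} with hUdef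
    have hUopen : ∀ n, IsOpen (U n) := by
      intro n
      exact hFlsc.isOpen_preimage (((-(n : ℝ) : ℝ)) : EReal)
    have hUcover : seg ⊆ ⋃ n, U n := by
      intro p _
      have hbp : (⊥ : EReal) < F p := bot_lt_iff_ne_bot.2 (hFbot p)
      obtain ⟨t, _, ht2⟩ := EReal.exists_between_coe_real hbp
      refine Set.mem_iUnion.2 ⟨⌈-t⌉₊, ?_⟩
      show (((-(⌈-t⌉₊ : ℝ) : ℝ)) : EReal) < F p
      refine lt_of_le_of_lt ?_ ht2
      rw [EReal.coe_le_coe_iff]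
      have := Nat.le_ceil (-t)
      linarith
    obtain ⟨tfin, htfin⟩ := hsegcpt.elim_finite_subcover U hUopen hUcover
    set N := tfin.sup id with hNdef
    have hsub : seg ⊆ U N := by
      intro p hp
      obtain ⟨i, hi, hpi⟩ := Set.mem_iUnion₂.1 (htfin hp)
      have hiN : i ≤ N := Finset.le_sup (f := id) hi
      have hpi' : (((-(i : ℝ) : ℝ)) : EReal) < F p := hpi
      show (((-(N : ℝ) : ℝ)) : EReal) < F p
      refine lt_of_le_of_lt ?_ hpi' 
      rw [EReal.coe_le_coe_iff]
      simp only [neg_le_neg_iff]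
      exact_mod_cast hiN
    obtain ⟨w, hw, hthick⟩ := hsegcpt.exists_thickening_subset_open (hUopen N) hsub
    refine ⟨w, hw, min (-(N : ℝ)) c, min_le_right _ _, fun z hz => ?_⟩
    have hzU : (((-(N : ℝ) : ℝ)) : EReal) < F z :=
      hthick ((Metric.mem_thickening_iff_infDist_lt hsegne).2 hz)
    refine le_trans ?_ (le_of_lt hzU)
    rw [EReal.coe_le_coe_iff]
    exact min_le_left _ _
  obtain ⟨w, hw, μ, hμc, hμ⟩ := htube
  -- constants
  set ρ : ℝ := min ρ₁ r / 4 with hρdef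
  have hρpos : 0 < ρ := by
    have h0 : 0 < min ρ₁ r := lt_min hρ₁pos hr
    rw [hρdef]; linarith
  set K : ℝ := (c - β) / (2 * r) with hKdef
  have hK : 0 < K := by rw [hKdef]; exact div_pos (by linarith) (by linarith)
  set ε : ℝ := K / 2 with hεdef
  have hε : 0 < ε := by rw [hεdef]; positivity
  -- distance function and tube
  set d : X → ℝ := fun z => infDist z seg with hddef
  have hdc : Continuous d := continuous_infDist_pt seg
  have hdnn : ∀ z, 0 ≤ d z := fun z => infDist_nonneg
  set V : Set X := {z | d z < w} with hVdef
  have hVopen : IsOpen V := isOpen_lt hdc continuous_const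
  have hdx₀ : d x₀ = 0 := infDist_zero_of_mem (left_mem_segment ℝ x₀ y₁)
  have hdy₁ : d y₁ = 0 := infDist_zero_of_mem (right_mem_segment ℝ x₀ y₁)
  have hx₀V : x₀ ∈ V := by show d x₀ < w; rw [hdx₀]; exact hw
  have hy₁V : y₁ ∈ V := by show d y₁ < w; rw [hdy₁]; exact hw
  -- convexity of d
  have hdconv : ∀ (p q : X) (a b : ℝ), 0 ≤ a → 0 ≤ b → a + b = 1 →
      d (a • p + b • q) ≤ a * d p + b * d q := by
    intro p q a b ha hb hab
    by_contra hcon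
    push_neg at hcon
    set δ : ℝ := (d (a • p + b • q) - (a * d p + b * d q)) / 2 with hδdef
    have hδpos : 0 < δ := by rw [hδdef]; linarith
    obtain ⟨p', hp'seg, hp'⟩ := (infDist_lt_iff hsegne).1
      (show infDist p seg < d p + δ from by show d p < d p + δ; linarith)
    obtain ⟨q', hq'seg, hq'⟩ := (infDist_lt_iff hsegne).1
      (show infDist q seg < d q + δ from by show d q < d q + δ; linarith)
    have hm : a • p' + b • q' ∈ seg := hsegconv hp'seg hq'seg ha hb hab
    have hcomb : a • p + b • q - (a • p' + b • q') = a • (p - p') + b • (q - q') := by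
      rw [smul_sub, smul_sub, sub_add_sub_comm]
    have hle : d (a • p + b • q) ≤ a * dist p p' + b * dist q q' := by
      calc d (a • p + b • q) ≤ dist (a • p + b • q) (a • p' + b • q') :=
            infDist_le_dist_of_mem hm
        _ = ‖a • p + b • q - (a • p' + b • q')‖ := dist_eq_norm _ _
        _ = ‖a • (p - p') + b • (q - q')‖ := by rw [hcomb]
        _ ≤ a * ‖p - p'‖ + b * ‖q - q'‖ := by
            refine le_trans (norm_add_le _ _) ?_
            rw [norm_smul, norm_smul, Real.norm_eq_abs, Real.norm_eq_abs,
              abs_of_nonneg ha, abs_of_nonneg hb]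
        _ = a * dist p p' + b * dist q q' := by rw [dist_eq_norm, dist_eq_norm]
    have h1 : a * dist p p' ≤ a * (d p + δ) := mul_le_mul_of_nonneg_left hp'.le ha
    have h2 : b * dist q q' ≤ b * (d q + δ) := mul_le_mul_of_nonneg_left hq'.le hb
    have h3 : a * (d p + δ) + b * (d q + δ) = a * d p + b * d q + δ := by
      have : a * (d p + δ) + b * (d q + δ) = a * d p + b * d q + (a + b) * δ := by ring
      rw [this, hab, one_mul]
    rw [hδdef] at *
    linarith
  have hVconv : Convex ℝ V := by
    intro p hp q hq a b ha hb hab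
    have hp' : d p < w := hp
    have hq' : d q < w := hq
    show d (a • p + b • q) < w
    refine lt_of_le_of_lt (hdconv p q a b ha hb hab) ?_
    rcases eq_or_lt_of_le ha with h | h
    · have hb1 : b = 1 := by linarith
      rw [← h, hb1]; simpa using hq'
    · have h1 : a * d p < a * w := (mul_lt_mul_iff_right₀ h).2 hp'
      have h2 : b * d q ≤ b * w := mul_le_mul_of_nonneg_left hq'.le hb
      have h3 : a * w + b * w = w := by rw [← add_mul, hab, one_mul]
      linarith
  -- penalized functional
  set g₀ : X → ℝ := fun z => -(φ z) + (K * max (‖z - x₀‖ - ρ) 0 + (w - d z)⁻¹) with hg₀def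
  set G : X → EReal := fun z => if d z < w then ((g₀ z : ℝ) : EReal) else (⊤ : EReal) with hGdef
  set Ψ : X → EReal := fun z => f z + G z with hΨdef
  have hΨapp : ∀ z, Ψ z = f z + G z := fun z => rfl
  have hGV : ∀ z, d z < w → G z = ((g₀ z : ℝ) : EReal) := by
    intro z hz; rw [hGdef]; simp only [if_pos hz]
  have hGtop : ∀ z, ¬ d z < w → G z = ⊤ := by
    intro z hz; rw [hGdef]; simp only [if_neg hz]
  have hΨV : ∀ z, d z < w →
      Ψ z = F z + ((K * max (‖z - x₀‖ - ρ) 0 + (w - d z)⁻¹ : ℝ) : EReal) := by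
    intro z hz
    rw [hΨapp z, hGV z hz]
    show f z + _ = (f z + _) + _
    rw [EReal.coe_add, add_assoc]
  have hΨtop : ∀ z, ¬ d z < w → Ψ z = ⊤ := by
    intro z hz
    rw [hΨapp z, hGtop z hz]
    exact EReal.add_top_of_ne_bot (hfbot z)
  have hbarw : ∀ z, d z < w → w⁻¹ ≤ (w - d z)⁻¹ ∧ 0 < (w - d z)⁻¹ := by
    intro z hz
    have h1 : 0 < w - d z := by linarith
    have h2 : w - d z ≤ w := by linarith [hdnn z]
    constructor
    · rw [inv_eq_one_div, inv_eq_one_div]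
      exact one_div_le_one_div_of_le h1 h2
    · positivity
  have hmaxnn : ∀ z : X, 0 ≤ K * max (‖z - x₀‖ - ρ) 0 := fun z =>
    mul_nonneg hK.le (le_max_right _ _)
  have hlow : ∀ z, d z < w → ((μ + (w - d z)⁻¹ : ℝ) : EReal) ≤ Ψ z := by
    intro z hz
    rw [hΨV z hz]
    calc ((μ + (w - d z)⁻¹ : ℝ) : EReal)
        ≤ ((μ : ℝ) : EReal) + ((K * max (‖z - x₀‖ - ρ) 0 + (w - d z)⁻¹ : ℝ) : EReal) := by
          rw [← EReal.coe_add]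
          exact EReal.coe_le_coe_iff.2 (by linarith [hmaxnn z])
      _ ≤ F z + _ := add_le_add_left (hμ z hz) _
  have hΨlow : ∀ z, (μ : EReal) ≤ Ψ z := by
    intro z
    by_cases hz : d z < w
    · refine le_trans ?_ (hlow z hz)
      exact EReal.coe_le_coe_iff.2 (by linarith [(hbarw z hz).2])
    · rw [hΨtop z hz]; exact le_top
  -- lower semicontinuity of Ψ
  have hΨlsc : LowerSemicontinuous Ψ := by
    intro z
    by_cases hz : d z < w
    · have hg₀c : ContinuousAt g₀ z := by
        have h1 : ContinuousAt (fun y => (w - d y)⁻¹) z := by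
          refine ContinuousAt.inv₀ ((continuous_const.sub hdc).continuousAt) ?_
          exact ne_of_gt (by linarith)
        have h2 : Continuous fun y : X => -(φ y) + K * max (‖y - x₀‖ - ρ) 0 :=
          (hφc.neg).add (continuous_const.mul
            (((((continuous_id.sub continuous_const).norm).sub continuous_const)).max
              continuous_const))
        have h3 : ContinuousAt
            (fun y : X => (-(φ y) + K * max (‖y - x₀‖ - ρ) 0) + (w - d y)⁻¹) z :=
          (h2.continuousAt).add h1
        have he : (fun y : X => (-(φ y) + K * max (‖y - x₀‖ - ρ) 0) + (w - d y)⁻¹) = g₀ := by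
          funext y; rw [hg₀def]; ring
        rw [← he]
        exact h3
      have hmain := lscAt_add_cont' (hflsc z) hfbot hg₀c
      intro b hb
      have hΨz : Ψ z = f z + ((g₀ z : ℝ) : EReal) := by rw [hΨapp z, hGV z hz]
      rw [hΨz] at hb
      filter_upwards [hmain b hb, hVopen.mem_nhds hz] with y h1 h2
      have : Ψ y = f y + ((g₀ y : ℝ) : EReal) := by rw [hΨapp y, hGV y h2]
      rw [this]
      exact h1
    · intro b hb
      rw [hΨtop z hz] at hb
      obtain ⟨t, hbt, _⟩ := EReal.exists_between_coe_real hb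
      obtain ⟨B, σ, hBpos, hσpos, hσB, htμ⟩ :
          ∃ B σ : ℝ, 0 < B ∧ 0 < σ ∧ σ ≤ B⁻¹ ∧ t - μ < B := by
        have h0 : (0:ℝ) < max (t - μ) 0 + 1 := by positivity
        refine ⟨max (t - μ) 0 + 1, (max (t - μ) 0 + 1)⁻¹, h0, inv_pos.2 h0, le_refl _, ?_⟩
        have := le_max_left (t - μ) 0
        linarith
      have hzw : w ≤ d z := not_lt.1 hz
      have hev : ∀ᶠ y in 𝓝 z, d z - σ < d y :=
        (hdc.continuousAt).eventually (eventually_gt_nhds (show d z - σ < d z by linarith))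
      filter_upwards [hev] with y hy
      by_cases hyw : d y < w
      · have h2 : w - d y < σ := by linarith
        have h3 : 0 < w - d y := by linarith
        have hinv : B < (w - d y)⁻¹ := by
          have h4 : σ⁻¹ ≤ (w - d y)⁻¹ := by
            rw [inv_eq_one_div, inv_eq_one_div]
            exact one_div_le_one_div_of_le h3 h2.le
          have h5 : B ≤ σ⁻¹ := by
            have := one_div_le_one_div_of_le hσpos hσB
            rw [one_div, one_div, inv_inv] at this
            exact this
          have h6 : B < B + 1 := by linarith
          have h7 : σ⁻¹ < (w - d y)⁻¹ := by
            rw [inv_eq_one_div, inv_eq_one_div]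
            exact one_div_lt_one_div_of_lt h3 h2
          linarith
        refine lt_trans hbt (lt_of_lt_of_le ?_ (hlow y hyw))
        exact EReal.coe_lt_coe_iff.2 (by linarith)
      · rw [hΨtop y hyw]
        exact lt_of_lt_of_le hbt le_top
  -- value at y₁
  have hdy₁w : d y₁ < w := by rw [hdy₁]; exact hw
  have hΨy₁ : Ψ y₁ = ((β + (K * max (r - ρ) 0 + w⁻¹) : ℝ) : EReal) := by
    rw [hΨV y₁ hdy₁w, ← hβ, hdy₁, sub_zero, ← hrdef, ← EReal.coe_add]
  have hΨy₁top : Ψ y₁ ≠ ⊤ := by rw [hΨy₁]; exact EReal.coe_ne_top _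
  -- Ekeland
  obtain ⟨xb, hxb1, hxb2⟩ := ekeland_EReal' Ψ hΨlsc μ hΨlow hε y₁ hΨy₁top
  have hvaly₁ : β + (K * max (r - ρ) 0 + w⁻¹) < c + w⁻¹ := by
    have h1 : max (r - ρ) 0 ≤ r := max_le (by linarith) hr.le
    have h2 : K * max (r - ρ) 0 ≤ K * r := mul_le_mul_of_nonneg_left h1 hK.le
    have h3 : K * r = (c - β) / 2 := by
      rw [hKdef]; field_simp
    linarith
  have hΨxb : Ψ xb ≤ Ψ y₁ := hxb1
  have hΨxbtop : Ψ xb ≠ ⊤ := by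
    intro h
    rw [h, hΨy₁, top_le_iff] at hΨxb
    exact EReal.coe_ne_top _ hΨxb
  have hdxbw : d xb < w := by
    by_contra hcon
    exact hΨxbtop (hΨtop xb hcon)
  have hfxbtop : f xb ≠ ⊤ := by
    intro h
    apply hΨxbtop
    rw [hΨapp xb, h, hGV xb hdxbw]
    exact EReal.top_add_coe _
  -- the convex perturbation g
  set g : X → EReal := fun z => G z + ((ε * dist z xb : ℝ) : EReal) with hgdef
  set g₁ : X → ℝ := fun z => g₀ z + ε * dist z xb with hg₁def
  have hgV : ∀ z, d z < w → g z = ((g₁ z : ℝ) : EReal) := by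
    intro z hz
    rw [hgdef]
    show G z + _ = _
    rw [hGV z hz, hg₁def, ← EReal.coe_add]
  -- global minimality of f + g at xb
  have hminglob : ∀ z, f xb + g xb ≤ f z + g z := by
    intro z
    have e2 : f xb + g xb = Ψ xb := by
      rw [hgdef]
      show f xb + (G xb + _) = f xb + G xb
      rw [dist_self, mul_zero, EReal.coe_zero, add_zero]
    have e1 : f z + g z = Ψ z + ((ε * dist z xb : ℝ) : EReal) := by
      rw [hgdef]
      show f z + (G z + _) = (f z + G z) + _
      rw [add_assoc]
    rw [e1, e2]
    exact hxb2 z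
  have hmin : IsLocalMin (fun z => f z + g z) xb :=
    Filter.Eventually.of_forall fun z => hminglob z
  have hxbV : xb ∈ V := hdxbw
  -- properties of g on V
  have hgfin : ∀ z ∈ V, g z ≠ ⊤ ∧ g z ≠ ⊥ := by
    intro z hz
    rw [hgV z hz]
    exact ⟨EReal.coe_ne_top _, EReal.coe_ne_bot _⟩
  have hgcont : ContinuousOn g V := by
    intro z hz
    have hz' : d z < w := hz
    have hg₁c : ContinuousAt g₁ z := by
      have h1 : ContinuousAt (fun y => (w - d y)⁻¹) z := by
        refine ContinuousAt.inv₀ ((continuous_const.sub hdc).continuousAt) ?_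
        exact ne_of_gt (by linarith)
      have h2 : Continuous fun y : X => -(φ y) + K * max (‖y - x₀‖ - ρ) 0 :=
        (hφc.neg).add (continuous_const.mul
          (((((continuous_id.sub continuous_const).norm).sub continuous_const)).max
            continuous_const))
      have h4 : Continuous fun y : X => ε * dist y xb :=
        continuous_const.mul (continuous_id.dist continuous_const)
      have h3 : ContinuousAt
          (fun y : X => (-(φ y) + K * max (‖y - x₀‖ - ρ) 0) + (w - d y)⁻¹ + ε * dist y xb) z :=
        ((h2.continuousAt).add h1).add (h4.continuousAt)
      have he : (fun y : X => (-(φ y) + K * max (‖y - x₀‖ - ρ) 0) + (w - d y)⁻¹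
          + ε * dist y xb) = g₁ := by
        funext y; rw [hg₁def, hg₀def]; ring
      rw [← he]
      exact h3
    have hc : ContinuousAt g z := by
      have hev : g =ᶠ[𝓝 z] fun y => ((g₁ y : ℝ) : EReal) := by
        filter_upwards [hVopen.mem_nhds hz] with y hy
        exact hgV y hy
      refine ContinuousAt.congr ?_ hev.symm
      exact (continuous_coe_real_ereal.continuousAt).comp hg₁c
    exact hc.continuousWithinAt
  -- convexity of g on V
  have hgconv : ERealConvexOn V g := by
    intro p hp q hq a b ha hb hab
    have hpq : a • p + b • q ∈ V := hVconv hp hq ha hb hab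
    have hp' : d p < w := hp
    have hq' : d q < w := hq
    have hpq' : d (a • p + b • q) < w := hpq
    rw [hgV _ hpq', hgV _ hp', hgV _ hq', ← EReal.coe_mul, ← EReal.coe_mul, ← EReal.coe_add,
      EReal.coe_le_coe_iff]
    -- real convexity inequality
    have hφcomb : φ (a • p + b • q) = a * φ p + b * φ q := by
      simp only [hφdef, map_sub, map_add, map_smul, smul_eq_mul]
      linear_combination (x₀s x₀) * hab
    have hnormcomb : ∀ pt : X, ‖a • p + b • q - pt‖ ≤ a * ‖p - pt‖ + b * ‖q - pt‖ := by
      intro pt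
      have h2 : a • pt + b • pt = pt := by rw [← add_smul, hab, one_smul]
      have h1 : a • p + b • q - pt = a • (p - pt) + b • (q - pt) := by
        rw [smul_sub, smul_sub, sub_add_sub_comm, h2]
      rw [h1]
      refine le_trans (norm_add_le _ _) ?_
      rw [norm_smul, norm_smul, Real.norm_eq_abs, Real.norm_eq_abs,
        abs_of_nonneg ha, abs_of_nonneg hb]
    have hmaxcomb : K * max (‖a • p + b • q - x₀‖ - ρ) 0 ≤
        a * (K * max (‖p - x₀‖ - ρ) 0) + b * (K * max (‖q - x₀‖ - ρ) 0) := by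
      have h1 := hnormcomb x₀
      have h2 : max (‖a • p + b • q - x₀‖ - ρ) 0 ≤
          a * max (‖p - x₀‖ - ρ) 0 + b * max (‖q - x₀‖ - ρ) 0 := by
        apply max_le
        · have ha1 : ‖p - x₀‖ - ρ ≤ max (‖p - x₀‖ - ρ) 0 := le_max_left _ _
          have hb1 : ‖q - x₀‖ - ρ ≤ max (‖q - x₀‖ - ρ) 0 := le_max_left _ _
          have ha2 : a * (‖p - x₀‖ - ρ) ≤ a * max (‖p - x₀‖ - ρ) 0 :=
            mul_le_mul_of_nonneg_left ha1 ha
          have hb2 : b * (‖q - x₀‖ - ρ) ≤ b * max (‖q - x₀‖ - ρ) 0 :=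
            mul_le_mul_of_nonneg_left hb1 hb
          nlinarith
        · have := mul_nonneg ha (le_max_right (‖p - x₀‖ - ρ) 0)
          have := mul_nonneg hb (le_max_right (‖q - x₀‖ - ρ) 0)
          linarith
      nlinarith [hK.le]
    have hbarcomb : (w - d (a • p + b • q))⁻¹ ≤ a * (w - d p)⁻¹ + b * (w - d q)⁻¹ := by
      set u : ℝ := w - d p with hudef
      set v : ℝ := w - d q with hvdef
      have hu : 0 < u := by rw [hudef]; linarith
      have hv : 0 < v := by rw [hvdef]; linarith
      have hd1 : d (a • p + b • q) ≤ a * d p + b * d q := hdconv p q a b ha hb hab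
      have hsum : 0 < a * u + b * v := by
        rcases eq_or_lt_of_le ha with h | h
        · have hb1 : b = 1 := by linarith
          rw [← h, hb1]; simpa using hv
        · have h1 : 0 < a * u := mul_pos h hu
          have h2 : 0 ≤ b * v := mul_nonneg hb hv.le
          linarith
      have hle1 : a * u + b * v ≤ w - d (a • p + b • q) := by
        rw [hudef, hvdef]; nlinarith
      have step1 : (w - d (a • p + b • q))⁻¹ ≤ (a * u + b * v)⁻¹ := by
        rw [inv_eq_one_div, inv_eq_one_div]
        exact one_div_le_one_div_of_le hsum hle1
      have step2 : (a * u + b * v)⁻¹ ≤ a * u⁻¹ + b * v⁻¹ := by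
        rw [inv_eq_one_div, div_le_iff₀ hsum]
        have key : (a * u⁻¹ + b * v⁻¹) * (a * u + b * v)
            = a^2 + b^2 + a*b*(u*v⁻¹ + v*u⁻¹) := by
          field_simp
          ring
        have h2uv : 0 ≤ u*v⁻¹ + v*u⁻¹ - 2 := by
          have e3 : u*v⁻¹ + v*u⁻¹ - 2 = (u-v)^2 * (u⁻¹*v⁻¹) := by
            field_simp
            ring
          rw [e3]
          positivity
        have hab2 : 0 ≤ a*b := mul_nonneg ha hb
        rw [key]
        nlinarith [mul_nonneg hab2 h2uv]
      exact le_trans step1 step2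
    have hdistcomb : ε * dist (a • p + b • q) xb ≤
        a * (ε * dist p xb) + b * (ε * dist q xb) := by
      have h1 := hnormcomb xb
      rw [dist_eq_norm, dist_eq_norm, dist_eq_norm]
      nlinarith [hε.le]
    show g₁ (a • p + b • q) ≤ a * g₁ p + b * g₁ q
    rw [hg₁def, hg₀def]
    simp only
    rw [hφcomb]
    nlinarith [hmaxcomb, hbarcomb, hdistcomb]
  -- apply P2
  obtain ⟨y, ys, ystar, hy_t, _, hys_mem, hys_w, hfench⟩ :=
    D.P2 f g xb V hflsc hfxbtop hVopen hxbV hVconv hgconv hgcont hgfin hmin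
  -- Banach–Steinhaus
  have hptbdd : ∀ v : X, ∃ C, ∀ n, ‖ys n v‖ ≤ C := by
    intro v
    have h1 : Tendsto (fun n => ‖ys n v‖) atTop (𝓝 ‖ystar v‖) := (hys_w v).norm
    obtain ⟨C, hC⟩ := h1.bddAbove_range
    exact ⟨C, fun n => hC ⟨n, rfl⟩⟩
  obtain ⟨C, hCbd⟩ := banach_steinhaus hptbdd
  -- limit of the monotonicity inequality
  have hterm1 : Tendsto (fun n => ys n (y n - xb)) atTop (𝓝 0) := by
    have hb : ∀ n, ‖ys n (y n - xb)‖ ≤ C * ‖y n - xb‖ := fun n =>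
      le_trans ((ys n).le_opNorm _) (mul_le_mul_of_nonneg_right (hCbd n) (norm_nonneg _))
    have h2 : Tendsto (fun n => y n - xb) atTop (𝓝 (xb - xb)) := hy_t.sub_const xb
    rw [sub_self] at h2
    have h3 : Tendsto (fun n => C * ‖y n - xb‖) atTop (𝓝 0) := by
      have := (h2.norm).const_mul C
      simpa using this
    exact squeeze_zero_norm hb h3
  have hterm2 : Tendsto (fun n => ys n (xb - x₀)) atTop (𝓝 (ystar (xb - x₀))) := hys_w _
  have hterm3 : Tendsto (fun n => x₀s (y n - x₀)) atTop (𝓝 (x₀s (xb - x₀))) :=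
    (x₀s.continuous.tendsto (xb - x₀)).comp (hy_t.sub_const x₀)
  have hdecomp : ∀ n, ys n (y n - x₀) = ys n (y n - xb) + ys n (xb - x₀) := by
    intro n
    rw [← map_add]
    congr 1
    abel
  have hsum : Tendsto (fun n => ys n (y n - x₀) - x₀s (y n - x₀)) atTop
      (𝓝 (ystar (xb - x₀) - x₀s (xb - x₀))) := by
    have h4 : Tendsto (fun n => ys n (y n - x₀)) atTop (𝓝 (0 + ystar (xb - x₀))) :=
      (hterm1.add hterm2).congr (fun n => (hdecomp n).symm)
    rw [zero_add] at h4
    exact h4.sub hterm3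
  have hlim : x₀s (xb - x₀) ≤ ystar (xb - x₀) := by
    have h0 := ge_of_tendsto' hsum (fun n => hmon (y n) (ys n) (hys_mem n))
    linarith
  -- Fenchel inequality at x₀
  have hfen := hfench x₀ hx₀V
  have hdx₀w : d x₀ < w := hx₀V
  rw [hgV xb hdxbw, hgV x₀ hdx₀w] at hfen
  rw [← EReal.coe_add, EReal.coe_le_coe_iff] at hfen
  -- simplify Fenchel inequality
  have hneg : (-ystar) (x₀ - xb) = ystar (xb - x₀) := by
    rw [ContinuousLinearMap.neg_apply, ← neg_sub xb x₀, map_neg, neg_neg]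
  rw [hneg] at hfen
  have hg₁xb : g₁ xb = -(φ xb) + (K * max (‖xb - x₀‖ - ρ) 0 + (w - d xb)⁻¹) := by
    simp only [hg₁def, hg₀def]
    simp [dist_self]
  have hg₁x₀ : g₁ x₀ = w⁻¹ + ε * dist x₀ xb := by
    simp only [hg₁def, hg₀def]
    have hφ0 : φ x₀ = 0 := by rw [hφdef]; simp
    have hmax0 : max (‖x₀ - x₀‖ - ρ) 0 = 0 := by
      rw [sub_self, norm_zero, zero_sub]
      exact max_eq_right (by linarith)
    rw [hφ0, hmax0, hdx₀, sub_zero]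
    ring
  rw [hg₁xb, hg₁x₀] at hfen
  have hφxb : φ xb = x₀s (xb - x₀) := by rw [hφdef]
  have hdistx₀xb : dist x₀ xb = ‖xb - x₀‖ := by rw [dist_eq_norm, norm_sub_rev]
  rw [hφxb, hdistx₀xb] at hfen
  -- pin-down
  have hbarxb : w⁻¹ ≤ (w - d xb)⁻¹ := (hbarw xb hdxbw).1
  have hpin : K * max (‖xb - x₀‖ - ρ) 0 ≤ ε * ‖xb - x₀‖ := by linarith
  have hsmall : ‖xb - x₀‖ ≤ 2 * ρ := by
    by_contra hcon
    push_neg at hcon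
    have h1 : max (‖xb - x₀‖ - ρ) 0 = ‖xb - x₀‖ - ρ := max_eq_left (by linarith)
    rw [h1, hεdef] at hpin
    nlinarith
  have hxbball : ‖xb - x₀‖ < ρ₁ := by
    have h2ρ : 2 * ρ < ρ₁ := by
      rw [hρdef]
      have := min_le_left ρ₁ r
      linarith
    linarith
  have hFxb : (c : EReal) ≤ F xb := by
    refine le_of_lt (hball xb ?_)
    rw [Metric.mem_ball, dist_eq_norm]
    exact hxbball
  -- final contradiction
  have hfin1 : ((c + w⁻¹ : ℝ) : EReal) ≤ Ψ xb := by
    rw [hΨV xb hdxbw]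
    have h1 : ((c + w⁻¹ : ℝ) : EReal) = (c : EReal) + ((w⁻¹ : ℝ) : EReal) := EReal.coe_add _ _
    rw [h1]
    refine add_le_add hFxb (EReal.coe_le_coe_iff.2 ?_)
    have := hmaxnn xb
    linarith
  have hfin2 : Ψ xb < ((c + w⁻¹ : ℝ) : EReal) := by
    refine lt_of_le_of_lt hΨxb ?_
    rw [hΨy₁]
    exact EReal.coe_lt_coe_iff.2 (by linarith)
  exact absurd (lt_of_le_of_lt hfin1 hfin2) (lt_irrefl _)


theorem monotone_related_mem_fenchel {X : Type*} [NormedAddCommGroup X] [NormedSpace ℝ X]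
    [CompleteSpace X]
    (D : FeasibleSubdifferential X)
    (f : X → EReal) (hfbot : ∀ x, f x ≠ ⊥) (hfproper : ∃ x, f x ≠ ⊤)
    (hflsc : LowerSemicontinuous f)
    (x₀ : X) (x₀s : X →L[ℝ] ℝ)
    (hmon : ∀ x : X, ∀ xs ∈ D.D f x, 0 ≤ xs (x - x₀) - x₀s (x - x₀)) :
    f x₀ ≠ ⊤ ∧ ∀ y : X, f x₀ + ((x₀s (y - x₀) : ℝ) : EReal) ≤ f y := by
  have key' : ∀ y₁ : X,
      ¬ (f y₁ + ((-(x₀s (y₁ - x₀)) : ℝ) : EReal) < f x₀ + ((-(x₀s (x₀ - x₀)) : ℝ) : EReal)) :=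
    fun y₁ h => key D f hfbot hflsc x₀ x₀s hmon y₁ h
  have hx₀0 : x₀s (x₀ - x₀) = 0 := by rw [sub_self, map_zero]
  have hF₀ : f x₀ + ((-(x₀s (x₀ - x₀)) : ℝ) : EReal) = f x₀ := by
    rw [hx₀0, neg_zero, EReal.coe_zero, add_zero]
  constructor
  · obtain ⟨z, hz⟩ := hfproper
    intro htop
    apply key' z
    rw [hF₀, htop]
    refine lt_top_iff_ne_top.2 ?_
    have hzr : f z = (((f z).toReal : ℝ) : EReal) := (EReal.coe_toReal hz (hfbot z)).symm
    rw [hzr, ← EReal.coe_add]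
    exact EReal.coe_ne_top _
  · intro yy
    by_cases hyy : f yy = ⊤
    · rw [hyy]; exact le_top
    have h1 : f x₀ ≤ f yy + ((-(x₀s (yy - x₀)) : ℝ) : EReal) := by
      have := key' yy
      rw [hF₀] at this
      exact not_lt.1 this
    have h2 := add_le_add_left h1 ((x₀s (yy - x₀) : ℝ) : EReal)
    rw [add_assoc, ← EReal.coe_add, neg_add_cancel, EReal.coe_zero, add_zero] at h2
    exact h2
end

section
/- Let X be a Banach space, ∂ a feasible subdifferential, and f : X → ℝ ∪ {+∞} a proper lower semicontinuous function. Then the domain of ∂f is nonempty, and for every x̄ ∈ X, f(x̄) ≤ sup{ f(x) + ⟨x*, x̄ − x⟩ : (x, x*) ∈ graph ∂f }. -/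
open Filter Topology

section AuxLemmas
open Metric Set

theorem my_ekeland {Y : Type*} [MetricSpace Y] [CompleteSpace Y]
    (T : Set Y) (hT : IsClosed T) (F : Y → ℝ)
    (hlsc : LowerSemicontinuousOn F T)
    (m : ℝ) (hm : ∀ y ∈ T, m ≤ F y) (x₀ : Y) (h₀ : x₀ ∈ T)
    (ε : ℝ) (hε : 0 < ε) :
    ∃ z ∈ T, F z ≤ F x₀ ∧ ∀ y ∈ T, F z ≤ F y + ε * dist y z := by
  classical
  set S : Y → Set Y := fun w => {y | y ∈ T ∧ F y + ε * dist y w ≤ F w} with hSdef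
  have hself : ∀ w ∈ T, w ∈ S w := fun w hw => ⟨hw, by simp⟩
  have hSsub : ∀ w, S w ⊆ T := fun w y hy => hy.1
  have hSclosed : ∀ w, IsClosed (S w) := by
    intro w
    have hH : LowerSemicontinuousOn (fun y => F y + ε * dist y w) T :=
      hlsc.add ((continuous_const.mul (continuous_id.dist continuous_const)).lowerSemicontinuous.lowerSemicontinuousOn T)
    rw [← closure_subset_iff_isClosed]
    intro x hx
    have hxT : x ∈ T := hT.closure_subset ((closure_mono (hSsub w)) hx)
    refine ⟨hxT, ?_⟩
    by_contra hcon
    push_neg at hcon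
    have h1 : ∀ᶠ y in 𝓝[T] x, F w < F y + ε * dist y w := hH x hxT (F w) hcon
    have hne : (𝓝[S w] x).NeBot := mem_closure_iff_nhdsWithin_neBot.mp hx
    have h2 : ∀ᶠ y in 𝓝[S w] x, F w < F y + ε * dist y w :=
      h1.filter_mono (nhdsWithin_mono x (hSsub w))
    obtain ⟨y, hy1, hy2⟩ := (h2.and eventually_mem_nhdsWithin).exists
    exact absurd hy2.2 (not_le.mpr hy1)
  have hbdd : ∀ w, BddBelow (F '' S w) := by
    rintro w
    exact ⟨m, by rintro v ⟨y, hy, rfl⟩; exact hm y hy.1⟩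
  have hne : ∀ w ∈ T, (F '' S w).Nonempty := fun w hw => ⟨F w, w, hself w hw, rfl⟩
  have key : ∀ (p : {w : Y // w ∈ T}) (n : ℕ),
      ∃ q : {w : Y // w ∈ T}, q.1 ∈ S p.1 ∧ F q.1 < sInf (F '' S p.1) + (1/2)^n := by
    intro p n
    obtain ⟨a, ⟨w, hw, rfl⟩, ha⟩ := Real.lt_sInf_add_pos (hne p.1 p.2)
      (pow_pos (by norm_num : (0:ℝ) < 1/2) n)
    exact ⟨⟨w, hw.1⟩, hw, ha⟩
  let z : ℕ → {w : Y // w ∈ T} := fun n =>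
    Nat.rec ⟨x₀, h₀⟩ (fun n p => Classical.choose (key p n)) n
  have hzrec : ∀ n : ℕ, (z (n+1)).1 ∈ S (z n).1 ∧
      F (z (n+1)).1 < sInf (F '' S (z n).1) + (1/2)^n :=
    fun n => Classical.choose_spec (key (z n) n)
  have hz0 : (z 0).1 = x₀ := rfl
  -- chained inequality
  have hchain : ∀ n m : ℕ, n ≤ m → F (z m).1 + ε * dist (z m).1 (z n).1 ≤ F (z n).1 := by
    intro n m hnm
    induction m, hnm using Nat.le_induction with
    | base => simp
    | succ k hk ih =>
      have h1 := (hzrec k).1.2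
      have htri : dist (z (k+1)).1 (z n).1 ≤ dist (z (k+1)).1 (z k).1 + dist (z k).1 (z n).1 :=
        dist_triangle _ _ _
      nlinarith [dist_nonneg (x := (z (k+1)).1) (y := (z k).1)]
  have hdec : ∀ n m : ℕ, n ≤ m → F (z m).1 ≤ F (z n).1 := by
    intro n m hnm
    have := hchain n m hnm
    nlinarith [dist_nonneg (x := (z m).1) (y := (z n).1)]
  have hFbdd : BddBelow (Set.range fun n => F (z n).1) := by
    refine ⟨m, ?_⟩
    rintro v ⟨n, rfl⟩
    exact hm _ (z n).2
  have hanti : Antitone fun n => F (z n).1 := fun n m h => hdec n m h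
  have hFtend : Tendsto (fun n => F (z n).1) atTop (𝓝 (⨅ n, F (z n).1)) :=
    tendsto_atTop_ciInf hanti hFbdd
  set ℓ : ℝ := ⨅ n, F (z n).1 with hldef
  have hlle : ∀ n, ℓ ≤ F (z n).1 := fun n => ciInf_le hFbdd n
  have hcauchy : CauchySeq fun n => (z n).1 := by
    apply cauchySeq_of_le_tendsto_0 (fun N => 2 * (F (z N).1 - ℓ) / ε)
    · intro n k N hn hk
      have h1 := hchain N n hn
      have h2 := hchain N k hk
      have h3 := hlle n
      have h4 := hlle k
      have htri : dist (z n).1 (z k).1 ≤ dist (z n).1 (z N).1 + dist (z k).1 (z N).1 := by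
        rw [dist_comm (z k).1]
        exact dist_triangle _ _ _
      rw [le_div_iff₀ hε]
      nlinarith
    · have h0 : Tendsto (fun N => F (z N).1 - ℓ) atTop (𝓝 0) := by
        have h := hFtend.sub (tendsto_const_nhds (x := ℓ))
        simpa using h
      have := (h0.const_mul 2).div_const ε
      simpa using this
  obtain ⟨xlim, hxlim⟩ := cauchySeq_tendsto_of_complete hcauchy
  have hxlimT : xlim ∈ T := hT.mem_of_tendsto hxlim (Eventually.of_forall fun n => (z n).2)
  have hxlimS : ∀ n, xlim ∈ S (z n).1 := by
    intro n
    refine (hSclosed (z n).1).mem_of_tendsto hxlim ?_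
    filter_upwards [eventually_ge_atTop n] with k hk
    exact ⟨(z k).2, hchain n k hk⟩
  refine ⟨xlim, hxlimT, ?_, ?_⟩
  · have := (hxlimS 0).2
    rw [hz0] at this
    nlinarith [dist_nonneg (x := xlim) (y := x₀), mul_nonneg hε.le (dist_nonneg (x := xlim) (y := x₀))]
  · intro y hy
    by_contra hcon
    push_neg at hcon
    have hyS : ∀ n, y ∈ S (z n).1 := by
      intro n
      have hA := (hxlimS n).2
      have htri : dist y (z n).1 ≤ dist y xlim + dist xlim (z n).1 := dist_triangle _ _ _
      refine ⟨hy, ?_⟩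
      nlinarith
    have hFy : ∀ n : ℕ, F xlim < F y + (1/2)^n := by
      intro n
      have h1 : sInf (F '' S (z n).1) ≤ F y := csInf_le (hbdd _) ⟨y, hyS n, rfl⟩
      have h2 := (hzrec n).2
      have h3 : F xlim ≤ F (z (n+1)).1 := by
        have := (hxlimS (n+1)).2
        nlinarith [mul_nonneg hε.le (dist_nonneg (x := xlim) (y := (z (n+1)).1))]
      linarith
    have hle : F xlim ≤ F y := by
      refine le_of_forall_pos_le_add ?_
      intro η hη
      obtain ⟨n, hn⟩ := exists_pow_lt_of_lt_one hη (by norm_num : (1:ℝ)/2 < 1)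
      exact (hFy n).le.trans (by linarith)
    nlinarith [mul_nonneg hε.le (dist_nonneg (x := y) (y := xlim))]

theorem my_convexOn_infDist {X : Type*} [NormedAddCommGroup X] [NormedSpace ℝ X] (s : Set X) (hne : s.Nonempty) (hs : Convex ℝ s) :
    ConvexOn ℝ univ (fun y => infDist y s) := by
  refine ⟨convex_univ, ?_⟩
  intro x _ y _ a b ha hb hab
  simp only [smul_eq_mul]
  refine le_of_forall_pos_le_add ?_
  intro η hη
  obtain ⟨u, hus, hu⟩ := (infDist_lt_iff hne).mp (by linarith : infDist x s < infDist x s + η)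
  obtain ⟨v, hvs, hv⟩ := (infDist_lt_iff hne).mp (by linarith : infDist y s < infDist y s + η)
  have hmem : a • u + b • v ∈ s := hs hus hvs ha hb hab
  have h1 : infDist (a • x + b • y) s ≤ dist (a • x + b • y) (a • u + b • v) :=
    infDist_le_dist_of_mem hmem
  have h2 : dist (a • x + b • y) (a • u + b • v) ≤ a * dist x u + b * dist y v := by
    rw [dist_eq_norm, dist_eq_norm, dist_eq_norm]
    have he : a • x + b • y - (a • u + b • v) = a • (x - u) + b • (y - v) := by
      rw [smul_sub, smul_sub]; abel
    rw [he]
    calc ‖a • (x - u) + b • (y - v)‖ ≤ ‖a • (x - u)‖ + ‖b • (y - v)‖ := norm_add_le _ _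
      _ = a * ‖x - u‖ + b * ‖y - v‖ := by
          rw [norm_smul, norm_smul, Real.norm_eq_abs, Real.norm_eq_abs, abs_of_nonneg ha,
            abs_of_nonneg hb]
  have h3 : a * dist x u ≤ a * (infDist x s + η) := mul_le_mul_of_nonneg_left hu.le ha
  have h4 : b * dist y v ≤ b * (infDist y s + η) := mul_le_mul_of_nonneg_left hv.le hb
  nlinarith

theorem my_isCompact_segment {X : Type*} [NormedAddCommGroup X] [NormedSpace ℝ X] (x y : X) : IsCompact (segment ℝ x y) := by
  rw [segment_eq_image']
  exact isCompact_Icc.image (by continuity)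

theorem my_tube_bound {X : Type*} [NormedAddCommGroup X] [NormedSpace ℝ X] (f : X → EReal) (hlsc : LowerSemicontinuous f) (hbot : ∀ x, f x ≠ ⊥)
    {K : Set X} (hK : IsCompact K) (hKne : K.Nonempty) :
    ∃ (m ρ : ℝ), 0 < ρ ∧ ∀ y, infDist y K ≤ ρ → (m : EReal) ≤ f y := by
  have h : ∀ s ∈ K, ∃ mU : ℝ × Set X, IsOpen mU.2 ∧ s ∈ mU.2 ∧ ∀ y ∈ mU.2, (mU.1 : EReal) ≤ f y := by
    intro s hs
    obtain ⟨q, _, hq2⟩ := EReal.exists_between_coe_real (Ne.bot_lt (hbot s))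
    have hev : ∀ᶠ y in 𝓝 s, (q : EReal) < f y := hlsc s _ hq2
    obtain ⟨U, hUsub, hUopen, hsU⟩ := _root_.eventually_nhds_iff.mp hev
    exact ⟨(q, U), hUopen, hsU, fun y hy => (hUsub y hy).le⟩
  choose! mU hUopen hmem hbound using h
  obtain ⟨b, hbK, hbfin, hbcov⟩ := hK.elim_finite_subcover_image
    (fun s hs => hUopen s hs) (fun s hs => mem_biUnion hs (hmem s hs))
  have hVopen : IsOpen (⋃ s ∈ b, (mU s).2) := isOpen_biUnion (fun s hs => hUopen s (hbK hs))
  obtain ⟨δ, hδ, hthick⟩ := hK.exists_thickening_subset_open hVopen hbcov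
  have hbne : b.Nonempty := by
    obtain ⟨s, hs⟩ := hKne
    obtain ⟨_, ⟨u, rfl⟩, _, ⟨hu, rfl⟩, hmem'⟩ := hbcov hs
    exact ⟨u, hu⟩
  -- min over finite set
  obtain ⟨m, hmmem⟩ : ∃ m : ℝ, ∀ s ∈ b, m ≤ (mU s).1 := by
    obtain ⟨m, hm⟩ := (hbfin.image (fun s => (mU s).1)).bddBelow
    exact ⟨m, fun s hs => hm ⟨s, hs, rfl⟩⟩
  refine ⟨m, δ / 2, by linarith, ?_⟩
  intro y hy
  have hyth : y ∈ thickening δ K := by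
    rw [mem_thickening_iff]
    obtain ⟨zz, hz1, hz2⟩ := (infDist_lt_iff hKne).mp (by linarith : infDist y K < δ)
    exact ⟨zz, hz1, by linarith⟩
  obtain ⟨_, ⟨u, rfl⟩, _, ⟨hu, rfl⟩, hmemy⟩ := hthick hyth
  exact le_trans (by exact_mod_cast hmmem u hu) (hbound u (hbK hu) y hmemy)

theorem my_segment_prop {X : Type*} [NormedAddCommGroup X] [NormedSpace ℝ X] (x₀ xbar : X) (p : X →L[ℝ] ℝ) (hp : p (xbar - x₀) = ‖xbar - x₀‖)
    {s : X} (hs : s ∈ segment ℝ x₀ xbar) :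
    p (xbar - s) = ‖xbar - s‖ ∧ ‖xbar - s‖ ≤ ‖xbar - x₀‖ := by
  obtain ⟨a, b, ha, hb, hab, rfl⟩ := hs
  have key : xbar - (a • x₀ + b • xbar) = a • (xbar - x₀) := by
    have hb' : b = 1 - a := by linarith
    subst hb'
    module
  rw [key, map_smul, hp, norm_smul, Real.norm_eq_abs, abs_of_nonneg ha]
  constructor
  · rfl
  · have ha1 : a ≤ 1 := by linarith
    nlinarith [norm_nonneg (xbar - x₀)]

set_option maxHeartbeats 2000000 in
theorem key_lemma {X : Type*} [NormedAddCommGroup X] [NormedSpace ℝ X] [CompleteSpace X]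
    (D : FeasibleSubdifferential X)
    (f : X → EReal) (hfbot : ∀ x, f x ≠ ⊥) (hflsc : LowerSemicontinuous f)
    (x₀ : X) (hx₀ : f x₀ ≠ ⊤) (xbar : X) (c : ℝ) (hc : (c : EReal) < f xbar) :
    ∃ (x : X) (xs : X →L[ℝ] ℝ), xs ∈ D.D f x ∧
      (c : EReal) < f x + ((xs (xbar - x) : ℝ) : EReal) := by
  classical
  set r₀ : ℝ := (f x₀).toReal with hr₀def
  have hfx₀ : f x₀ = (r₀ : EReal) := (EReal.coe_toReal hx₀ (hfbot x₀)).symm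
  clear_value r₀
  set Sg : Set X := segment ℝ x₀ xbar with hSgdef
  have hSgne : Sg.Nonempty := ⟨x₀, left_mem_segment ℝ x₀ xbar⟩
  have hx₀Sg : x₀ ∈ Sg := left_mem_segment ℝ x₀ xbar
  have hxbarSg : xbar ∈ Sg := right_mem_segment ℝ x₀ xbar
  obtain ⟨m₁, ρ₁, hρ₁, hm₁⟩ := my_tube_bound f hflsc hfbot (my_isCompact_segment x₀ xbar) hSgne
  set m : ℝ := min m₁ (min r₀ c) with hmdef
  have hmm₁ : m ≤ m₁ := min_le_left _ _
  have hmr₀ : m ≤ r₀ := le_trans (min_le_right _ _) (min_le_left _ _)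
  have hmc : m ≤ c := le_trans (min_le_right _ _) (min_le_right _ _)
  have hm : ∀ y, infDist y Sg ≤ ρ₁ → (m : EReal) ≤ f y := by
    intro y hy
    exact le_trans (by exact_mod_cast hmm₁) (hm₁ y hy)
  clear_value m
  obtain ⟨c', hcc', hc'f⟩ := EReal.exists_between_coe_real hc
  have hcc'R : c < c' := by exact_mod_cast hcc'
  set γ : ℝ := c' - c with hγdef
  have hγ : 0 < γ := sub_pos.mpr hcc'R
  clear_value γ
  have hev : ∀ᶠ y in 𝓝 xbar, (c' : EReal) < f y := hflsc xbar _ hc'f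
  obtain ⟨δ, hδ, hδf⟩ := Metric.eventually_nhds_iff.mp hev
  obtain ⟨p, hpnorm, hpu⟩ := exists_dual_vector'' ℝ (xbar - x₀)
  have hpu' : p (xbar - x₀) = ‖xbar - x₀‖ := by exact_mod_cast hpu
  set d : ℝ := ‖xbar - x₀‖ with hddef
  have hd : 0 ≤ d := by rw [hddef]; exact norm_nonneg _
  clear_value d
  set t : ℝ := 2 * (c' - m) / δ + 1 with htdef
  have ht : 0 < t := by
    have h1 : 0 < c' - m := by linarith
    have h2 : 0 < 2 * (c' - m) / δ := by positivity
    rw [htdef]; linarith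
  set ρ₂ : ℝ := min ρ₁ (min 1 (min (δ/8) (γ/(8*(t+1))))) with hρ₂def
  have hρ₂pos : 0 < ρ₂ := by
    refine lt_min hρ₁ (lt_min one_pos (lt_min (by linarith) (by positivity)))
  have hρ₂ρ₁ : ρ₂ ≤ ρ₁ := min_le_left _ _
  have hρ₂1 : ρ₂ ≤ 1 := le_trans (min_le_right _ _) (min_le_left _ _)
  have hρ₂δ : ρ₂ ≤ δ/8 := le_trans (min_le_right _ _) (le_trans (min_le_right _ _) (min_le_left _ _))
  have hρ₂γ : ρ₂ ≤ γ/(8*(t+1)) :=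
    le_trans (min_le_right _ _) (le_trans (min_le_right _ _) (min_le_right _ _))
  clear_value t ρ₂
  set T : Set X := {y : X | infDist y Sg ≤ ρ₂} with hTdef
  have hTclosed : IsClosed T := isClosed_le (continuous_infDist_pt Sg) continuous_const
  have hx₀T : x₀ ∈ T := by
    simp only [hTdef, mem_setOf_eq, infDist_zero_of_mem hx₀Sg]
    exact hρ₂pos.le
  have hmT : ∀ y ∈ T, (m : EReal) ≤ f y := fun y hy => hm y (le_trans hy hρ₂ρ₁)
  have hclose : ∀ y ∈ T, ∃ s ∈ Sg, dist y s < 2*ρ₂ := by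
    intro y hy
    have hy' : infDist y Sg ≤ ρ₂ := hy
    exact (infDist_lt_iff hSgne).mp (by linarith)
  have hdistbar : ∀ y ∈ T, dist y xbar ≤ d + 2 := by
    intro y hy
    obtain ⟨s, hsSg, hds⟩ := hclose y hy
    have h2 := (my_segment_prop x₀ xbar p (by rw [hpu', hddef]) hsSg).2
    rw [← hddef] at h2
    have h3 : dist s xbar = ‖xbar - s‖ := by rw [dist_eq_norm, norm_sub_rev]
    have h4 : dist y xbar ≤ dist y s + dist s xbar := dist_triangle _ _ _
    have : dist y xbar ≤ 2*ρ₂ + d := by rw [h3] at h4; linarith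
    linarith
  have hpxy : ∀ y ∈ T, dist y xbar - 4*ρ₂ ≤ p xbar - p y := by
    intro y hy
    obtain ⟨s, hsSg, hds⟩ := hclose y hy
    obtain ⟨hps, hns⟩ := my_segment_prop x₀ xbar p (by rw [hpu', hddef]) hsSg
    have h1 : p xbar - p y = p (xbar - s) + p (s - y) := by rw [map_sub, map_sub]; ring
    have h2 : |p (s - y)| ≤ ‖s - y‖ := by
      calc |p (s - y)| = ‖p (s - y)‖ := (Real.norm_eq_abs _).symm
        _ ≤ ‖p‖ * ‖s - y‖ := p.le_opNorm _
        _ ≤ 1 * ‖s - y‖ := mul_le_mul_of_nonneg_right hpnorm (norm_nonneg _)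
        _ = ‖s - y‖ := one_mul _
    have h3 : dist y xbar ≤ dist y s + ‖xbar - s‖ := by
      have := dist_triangle y s xbar
      rw [show dist s xbar = ‖xbar - s‖ by rw [dist_eq_norm, norm_sub_rev]] at this
      exact this
    have h4 : ‖s - y‖ = dist y s := by rw [← dist_eq_norm, dist_comm]
    have h5 := neg_abs_le (p (s - y))
    rw [h1, hps]
    linarith
  -- tube value bound
  have hh : ∀ y ∈ T, ((c + γ/2 : ℝ) : EReal) ≤ f y + ((t * (p xbar - p y) : ℝ) : EReal) := by
    intro y hy
    have hp4 := hpxy y hy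
    by_cases hcase : dist y xbar < δ
    · have hf : (c' : EReal) < f y := hδf hcase
      have hτ : -(γ/2) ≤ t * (p xbar - p y) := by
        have h1 : -(4*ρ₂) ≤ p xbar - p y := by
          have := dist_nonneg (x := y) (y := xbar); linarith
        have h2 : t * (-(4*ρ₂)) ≤ t * (p xbar - p y) := mul_le_mul_of_nonneg_left h1 ht.le
        have h3 : 8 * (t+1) * ρ₂ ≤ γ := by
          have := mul_le_mul_of_nonneg_left hρ₂γ (by positivity : (0:ℝ) ≤ 8*(t+1))
          rw [mul_div_cancel₀] at this
          · linarith
          · positivity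
        have h4 : t * (4*ρ₂) ≤ γ/2 := by linarith [hρ₂pos.le]
        linarith
      calc ((c + γ/2 : ℝ) : EReal) ≤ ((c' + t * (p xbar - p y) : ℝ) : EReal) := by
            rw [EReal.coe_le_coe_iff]
            have : c + γ/2 = c' - γ/2 := by rw [hγdef]; ring
            linarith
        _ = (c' : EReal) + ((t * (p xbar - p y) : ℝ) : EReal) := EReal.coe_add _ _
        _ ≤ f y + ((t * (p xbar - p y) : ℝ) : EReal) := add_le_add_left hf.le _
    · push_neg at hcase
      have hfy : (m : EReal) ≤ f y := hmT y hy
      have htδ : t * δ = 2*(c'-m) + δ := by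
        rw [htdef]; field_simp
      have hτ : c + γ/2 ≤ m + t * (p xbar - p y) := by
        have h1 : δ - 4*ρ₂ ≤ p xbar - p y := by linarith
        have h2 : t * (δ - 4*ρ₂) ≤ t * (p xbar - p y) := mul_le_mul_of_nonneg_left h1 ht.le
        have h3 : t * ρ₂ ≤ t * (δ/8) := mul_le_mul_of_nonneg_left hρ₂δ ht.le
        have : c + γ/2 ≤ c' := by rw [hγdef]; linarith
        linarith [h2, h3, htδ, hδ, this]
      calc ((c + γ/2 : ℝ) : EReal) ≤ ((m + t * (p xbar - p y) : ℝ) : EReal) := by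
            rw [EReal.coe_le_coe_iff]; exact hτ
        _ = (m : EReal) + ((t * (p xbar - p y) : ℝ) : EReal) := EReal.coe_add _ _
        _ ≤ f y + ((t * (p xbar - p y) : ℝ) : EReal) := add_le_add_left hfy _
  -- constants for the Ekeland argument
  set P : ℝ := |p xbar| + d + 2 with hPdef
  have hP : ∀ y ∈ T, |p y| ≤ P := by
    intro y hy
    have h1 : |p y - p xbar| ≤ d + 2 := by
      calc |p y - p xbar| = ‖p (y - xbar)‖ := by rw [map_sub, Real.norm_eq_abs]
        _ ≤ ‖p‖ * ‖y - xbar‖ := p.le_opNorm _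
        _ ≤ 1 * ‖y - xbar‖ := mul_le_mul_of_nonneg_right hpnorm (norm_nonneg _)
        _ = dist y xbar := by rw [one_mul, dist_eq_norm]
        _ ≤ d + 2 := hdistbar y hy
    have h2 := abs_add_le (p xbar) (p y - p xbar)
    have h3 : p xbar + (p y - p xbar) = p y := by ring
    rw [h3] at h2
    rw [hPdef]
    linarith
  have hPpos : 0 ≤ P := by
    have := abs_nonneg (p xbar); rw [hPdef]; linarith
  clear_value P
  set K : ℝ := (r₀ - m + 2*t*P)/ρ₂ + 1 with hKdef
  have hKnum : 0 ≤ r₀ - m + 2*t*P := by nlinarith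
  have hKρ : K * ρ₂ = (r₀ - m + 2*t*P) + ρ₂ := by
    rw [hKdef]; field_simp
  have hKpos : 0 < K := by
    rw [hKdef]
    have : 0 ≤ (r₀ - m + 2*t*P)/ρ₂ := div_nonneg hKnum hρ₂pos.le
    linarith
  clear_value K
  set ε : ℝ := γ/(8*(d+3)) with hεdef
  have hεpos : 0 < ε := by rw [hεdef]; positivity
  have hε8 : ε * (8*(d+3)) = γ := by
    rw [hεdef]; field_simp
  clear_value ε
  set Gb : ℝ := K + t*P with hGbdef
  have hGbpos : 0 ≤ Gb := by
    rw [hGbdef]; linarith only [hKpos, mul_nonneg ht.le hPpos]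
  set G₀ : X → ℝ := fun y => K * infDist y Sg + (-t) * p y with hG₀def
  have hG₀bound : ∀ y ∈ T, |G₀ y| ≤ Gb := by
    intro y hy
    have h1 : (0:ℝ) ≤ infDist y Sg := infDist_nonneg
    have h2 : infDist y Sg ≤ ρ₂ := hy
    have h4 : K * infDist y Sg ≤ K * 1 := mul_le_mul_of_nonneg_left (le_trans h2 hρ₂1) hKpos.le
    have h5 : t * |p y| ≤ t * P := mul_le_mul_of_nonneg_left (hP y hy) ht.le
    have h8 : t * (-(p y)) ≤ t * |p y| := mul_le_mul_of_nonneg_left (neg_le_abs _) ht.le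
    have h9 : t * p y ≤ t * |p y| := mul_le_mul_of_nonneg_left (le_abs_self _) ht.le
    have h0 : 0 ≤ K * infDist y Sg := mul_nonneg hKpos.le h1
    have hGy : G₀ y = K * infDist y Sg + (-t) * p y := by rw [hG₀def]
    rw [hGy, hGbdef, abs_le]
    constructor
    · linarith only [h0, h9, h5, hKpos]
    · linarith only [h4, h8, h5, hKpos]
  clear_value Gb
  set M : ℝ := r₀ + 4*Gb + 1 with hMdef
  have hmM : m ≤ M := by rw [hMdef]; linarith only [hmr₀, hGbpos]
  have hr₀M : r₀ ≤ M := by rw [hMdef]; linarith only [hGbpos]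
  clear_value M
  set fR : X → ℝ := fun y => (min (f y) ((M:ℝ) : EReal)).toReal with hfRdef
  have hfR_eq : ∀ y, f y ≤ ((M:ℝ) : EReal) → f y = ((fR y : ℝ) : EReal) := by
    intro y hle
    have hmin : min (f y) ((M:ℝ):EReal) = f y := min_eq_left hle
    have hne1 : f y ≠ ⊤ := ne_top_of_le_ne_top (EReal.coe_ne_top M) hle
    have : fR y = (f y).toReal := by rw [hfRdef]; simp only [hmin]
    rw [this]
    exact (EReal.coe_toReal hne1 (hfbot y)).symm
  have hfRlow : ∀ y ∈ T, m ≤ fR y := by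
    intro y hy
    have h1 : ((m:ℝ) : EReal) ≤ min (f y) ((M:ℝ):EReal) :=
      le_min (hmT y hy) (by exact_mod_cast hmM)
    have h2 : min (f y) ((M:ℝ):EReal) ≠ ⊤ :=
      ne_top_of_le_ne_top (EReal.coe_ne_top M) (min_le_right _ _)
    have h3 := EReal.toReal_le_toReal h1 (EReal.coe_ne_bot m) h2
    rw [EReal.toReal_coe] at h3
    exact h3
  have hfRM : ∀ y, fR y ≤ M := by
    intro y
    have h2 : min (f y) ((M:ℝ):EReal) ≤ ((M:ℝ):EReal) := min_le_right _ _
    have h3 : min (f y) ((M:ℝ):EReal) ≠ ⊥ :=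
      (lt_min (Ne.bot_lt (hfbot y)) (EReal.bot_lt_coe M)).ne'
    have h4 := EReal.toReal_le_toReal h2 h3 (EReal.coe_ne_top M)
    rw [EReal.toReal_coe] at h4
    exact h4
  have hfRx₀ : fR x₀ = r₀ := by
    rw [hfRdef]
    simp only [hfx₀]
    rw [min_eq_left (by exact_mod_cast hr₀M : ((r₀:ℝ):EReal) ≤ ((M:ℝ):EReal))]
    exact EReal.toReal_coe r₀
  have hfRlsc : LowerSemicontinuousOn fR T := by
    intro x hx b hb
    have hne1 : min (f x) ((M:ℝ):EReal) ≠ ⊤ :=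
      ne_top_of_le_ne_top (EReal.coe_ne_top M) (min_le_right _ _)
    have hne2 : min (f x) ((M:ℝ):EReal) ≠ ⊥ :=
      (lt_min (Ne.bot_lt (hfbot x)) (EReal.bot_lt_coe M)).ne'
    have hcoe : ((fR x : ℝ) : EReal) = min (f x) ((M:ℝ):EReal) := by
      rw [hfRdef]; exact EReal.coe_toReal hne1 hne2
    have hbx : ((b:ℝ) : EReal) < min (f x) ((M:ℝ):EReal) := by
      rw [← hcoe]; exact_mod_cast hb
    have hbf : ((b:ℝ) : EReal) < f x := lt_of_lt_of_le hbx (min_le_left _ _)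
    have hbM : ((b:ℝ) : EReal) < ((M:ℝ):EReal) := lt_of_lt_of_le hbx (min_le_right _ _)
    have hev2 : ∀ᶠ y in 𝓝 x, ((b:ℝ):EReal) < f y := hflsc x _ hbf
    have hev3 : ∀ᶠ y in 𝓝[T] x, ((b:ℝ):EReal) < f y := hev2.filter_mono nhdsWithin_le_nhds
    filter_upwards [hev3] with y hy
    have h4 : ((b:ℝ):EReal) < min (f y) ((M:ℝ):EReal) := lt_min hy hbM
    have hne3 : min (f y) ((M:ℝ):EReal) ≠ ⊤ :=
      ne_top_of_le_ne_top (EReal.coe_ne_top M) (min_le_right _ _)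
    have hne4 : min (f y) ((M:ℝ):EReal) ≠ ⊥ := ((EReal.bot_lt_coe b).trans h4).ne'
    have hcoe2 : ((fR y : ℝ) : EReal) = min (f y) ((M:ℝ):EReal) := by
      rw [hfRdef]; exact EReal.coe_toReal hne3 hne4
    rw [← hcoe2] at h4
    exact_mod_cast h4
  set Freal : X → ℝ := fun y => fR y + G₀ y with hFrealdef
  have hFlsc : LowerSemicontinuousOn Freal T := by
    apply hfRlsc.add
    exact ((continuous_const.mul (continuous_infDist_pt Sg)).add
      (continuous_const.mul p.continuous)).lowerSemicontinuous.lowerSemicontinuousOn T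
  have hmF : ∀ y ∈ T, m - t*P ≤ Freal y := by
    intro y hy
    have h1 := hfRlow y hy
    have h3 : 0 ≤ K * infDist y Sg := mul_nonneg hKpos.le infDist_nonneg
    have hA : t * p y ≤ t * P := le_trans
      (mul_le_mul_of_nonneg_left (le_abs_self _) ht.le)
      (mul_le_mul_of_nonneg_left (hP y hy) ht.le)
    show m - t*P ≤ fR y + (K * infDist y Sg + (-t) * p y)
    linarith only [h1, h3, hA]
  have hFx₀ : Freal x₀ ≤ r₀ + t*P := by
    have hA : t * (-(p x₀)) ≤ t * P := le_trans
      (mul_le_mul_of_nonneg_left (neg_le_abs _) ht.le)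
      (mul_le_mul_of_nonneg_left (hP x₀ hx₀T) ht.le)
    show fR x₀ + (K * infDist x₀ Sg + (-t) * p x₀) ≤ r₀ + t*P
    rw [infDist_zero_of_mem hx₀Sg, hfRx₀]
    linarith only [hA]
  obtain ⟨zE, hzET, hzE0, hzmin⟩ := my_ekeland T hTclosed Freal hFlsc (m - t*P) hmF x₀ hx₀T ε hεpos
  have hG₀zE := hG₀bound zE hzET
  have hfRzE : fR zE ≤ r₀ + 2*Gb := by
    have h1 : fR zE + G₀ zE ≤ r₀ + t*P := le_trans hzE0 hFx₀
    have h2 : t*P ≤ Gb := by rw [hGbdef]; linarith only [hKpos]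
    linarith only [h1, h2, (abs_le.mp hG₀zE).1]
  have haE : f zE = ((fR zE : ℝ) : EReal) := by
    by_cases hle : f zE ≤ ((M:ℝ):EReal)
    · exact hfR_eq zE hle
    · exfalso
      push_neg at hle
      have hmin : min (f zE) ((M:ℝ):EReal) = ((M:ℝ):EReal) := min_eq_right hle.le
      have heq : fR zE = M := by rw [hfRdef]; simp only [hmin]; exact EReal.toReal_coe M
      linarith only [hfRzE, heq, hGbpos, hMdef]
  have hdSzE : infDist zE Sg < ρ₂ := by
    have h1 : fR zE + (K * infDist zE Sg + (-t) * p zE) ≤ r₀ + t*P := le_trans hzE0 hFx₀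
    have h2 := hfRlow zE hzET
    have hA : t * p zE ≤ t * P := le_trans
      (mul_le_mul_of_nonneg_left (le_abs_self _) ht.le)
      (mul_le_mul_of_nonneg_left (hP zE hzET) ht.le)
    have h4 : K * infDist zE Sg ≤ r₀ - m + 2*t*P := by linarith only [h1, h2, hA]
    have h5 : K * infDist zE Sg < K * ρ₂ := by rw [hKρ]; linarith only [h4, hρ₂pos]
    exact lt_of_mul_lt_mul_left h5 hKpos.le
  set O : Set X := {y : X | infDist y Sg < ρ₂} with hOdef
  have hOopen : IsOpen O := isOpen_lt (continuous_infDist_pt Sg) continuous_const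
  have hzEO : zE ∈ O := hdSzE
  have hOT : O ⊆ T := fun y hy => le_of_lt (show infDist y Sg < ρ₂ from hy)
  set G : X → ℝ := fun y => G₀ y + ε * dist y zE with hGdef
  set g : X → EReal := fun y => ((G y : ℝ) : EReal) with hgdef
  have hdzz : dist zE zE = 0 := dist_self zE
  have hlocal : IsLocalMin (fun y => f y + g y) zE := by
    refine Filter.eventually_of_mem (hOopen.mem_nhds hzEO) ?_
    intro y hyO
    have hyT : y ∈ T := hOT hyO
    have hzm : Freal zE ≤ Freal y + ε * dist y zE := hzmin y hyT
    show f zE + g zE ≤ f y + g y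
    by_cases hle : f y ≤ ((M:ℝ):EReal)
    · have hy_eq : f y = ((fR y : ℝ) : EReal) := hfR_eq y hle
      rw [haE, hy_eq]
      show ((fR zE : ℝ) : EReal) + ((G zE : ℝ) : EReal) ≤ ((fR y : ℝ) : EReal) + ((G y : ℝ) : EReal)
      rw [← EReal.coe_add, ← EReal.coe_add, EReal.coe_le_coe_iff]
      have hGzE' : G zE = G₀ zE := by rw [hGdef]; simp only [hdzz, mul_zero, add_zero]
      have hGy' : G y = G₀ y + ε * dist y zE := by rw [hGdef]
      have hFzE' : Freal zE = fR zE + G₀ zE := by rw [hFrealdef]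
      have hFy' : Freal y = fR y + G₀ y := by rw [hFrealdef]
      rw [hGzE', hGy']
      linarith only [hzm, hFzE', hFy']
    · push_neg at hle
      have h1 : ((M:ℝ):EReal) + g y ≤ f y + g y := add_le_add_left hle.le _
      refine le_trans ?_ h1
      rw [haE]
      show ((fR zE : ℝ) : EReal) + ((G zE : ℝ) : EReal) ≤ ((M:ℝ):EReal) + ((G y : ℝ) : EReal)
      rw [← EReal.coe_add, ← EReal.coe_add, EReal.coe_le_coe_iff]
      have hGzE' : G zE = G₀ zE := by rw [hGdef]; simp only [hdzz, mul_zero, add_zero]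
      have hGy' : G y = G₀ y + ε * dist y zE := by rw [hGdef]
      have h3 : 0 ≤ ε * dist y zE := mul_nonneg hεpos.le dist_nonneg
      rw [hGzE', hGy']
      linarith only [(abs_le.mp hG₀zE).2, (abs_le.mp (hG₀bound y hyT)).1, hfRzE, hMdef, h3, hGbpos]
  -- convexity and continuity of g
  have hGcont : Continuous G := by
    have : Continuous G₀ := (continuous_const.mul (continuous_infDist_pt Sg)).add
      (continuous_const.mul p.continuous)
    rw [hGdef]
    exact this.add (continuous_const.mul (continuous_id.dist continuous_const))
  have hgcont : ContinuousOn g univ := by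
    rw [hgdef]
    exact (continuous_coe_real_ereal.comp hGcont).continuousOn
  have hGconv : ConvexOn ℝ univ G := by
    have h1 : ConvexOn ℝ univ (fun y => K * infDist y Sg) := by
      have := (my_convexOn_infDist Sg hSgne (convex_segment x₀ xbar)).smul hKpos.le
      simpa [smul_eq_mul] using this
    have h2 : ConvexOn ℝ univ (fun y : X => (-t) * p y) := by
      refine ⟨convex_univ, ?_⟩
      intro u _ v _ a b ha hb hab
      simp only [map_add, map_smul, smul_eq_mul]
      exact le_of_eq (by ring)
    have h3 : ConvexOn ℝ univ (fun y => ε * dist y zE) := by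
      have := (convexOn_univ_dist zE).smul hεpos.le
      simpa [smul_eq_mul] using this
    have h12 : ConvexOn ℝ univ G₀ := by
      have := h1.add h2
      rw [hG₀def]
      exact this
    have := h12.add h3
    rw [hGdef]
    exact this
  have hgconv : ERealConvexOn univ g := by
    intro u _ v _ a b ha hb hab
    have h := hGconv.2 (mem_univ u) (mem_univ v) ha hb hab
    show ((G (a • u + b • v) : ℝ) : EReal) ≤ (a : EReal) * ((G u : ℝ) : EReal) + (b : EReal) * ((G v : ℝ) : EReal)
    rw [← EReal.coe_mul, ← EReal.coe_mul, ← EReal.coe_add, EReal.coe_le_coe_iff]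
    simpa [smul_eq_mul] using h
  have hfzEtop : f zE ≠ ⊤ := by rw [haE]; exact EReal.coe_ne_top _
  obtain ⟨yseq, ys, ystar, hyto, hfto, hysmem, hysconv, hfen⟩ :=
    D.P2 f g zE univ hflsc hfzEtop isOpen_univ (mem_univ zE) convex_univ hgconv hgcont
      (fun y _ => ⟨EReal.coe_ne_top _, EReal.coe_ne_bot _⟩) hlocal
  -- Fenchel inequality at xbar
  have hfen2 := hfen xbar (mem_univ xbar)
  have hyst : G zE - G xbar ≤ ystar (xbar - zE) := by
    have h := hfen2
    show _ ≤ _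
    have h' : ((G zE : ℝ) : EReal) + ((-ystar) (xbar - zE) : ℝ) ≤ ((G xbar : ℝ) : EReal) := h
    rw [← EReal.coe_add, EReal.coe_le_coe_iff] at h'
    simp only [ContinuousLinearMap.neg_apply] at h'
    linarith only [h']
  have hdistzE : dist xbar zE ≤ d + 2 := by
    rw [dist_comm]; exact hdistbar zE hzET
  have hGdiff : t * (p xbar - p zE) - ε * (d + 2) ≤ G zE - G xbar := by
    have h1 : infDist xbar Sg = 0 := infDist_zero_of_mem hxbarSg
    have hGzE' : G zE = K * infDist zE Sg + (-t) * p zE := by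
      simp only [hGdef, hG₀def, hdzz, mul_zero, add_zero]
    have hGxbar' : G xbar = (-t) * p xbar + ε * dist xbar zE := by
      rw [hGdef]
      show G₀ xbar + ε * dist xbar zE = _
      have : G₀ xbar = K * infDist xbar Sg + (-t) * p xbar := by rw [hG₀def]
      rw [this, h1, mul_zero]; ring
    have h3 : 0 ≤ K * infDist zE Sg := mul_nonneg hKpos.le infDist_nonneg
    have h4 : ε * dist xbar zE ≤ ε * (d + 2) := mul_le_mul_of_nonneg_left hdistzE hεpos.le
    rw [hGzE', hGxbar']
    linarith only [h3, h4]
  have hlower : c + γ/2 ≤ fR zE + t * (p xbar - p zE) := by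
    have h := hh zE hzET
    rw [haE, ← EReal.coe_add, EReal.coe_le_coe_iff] at h
    linarith only [h]
  have hεd : ε * (d + 2) ≤ γ/4 := by
    have h1 : ε * (d + 2) ≤ ε * (d + 3) := by
      apply mul_le_mul_of_nonneg_left _ hεpos.le
      linarith
    have h2 : 8 * (ε * (d+3)) = γ := by linarith only [hε8]
    linarith only [h1, h2, hεpos.le, mul_nonneg hεpos.le (by linarith : (0:ℝ) ≤ d + 3)]
  have hcL : c < fR zE + ystar (xbar - zE) := by
    have := hγ
    linarith only [hyst, hGdiff, hlower, hεd, hγ]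
  -- Banach-Steinhaus: uniform bound on the ys n
  obtain ⟨C, hC⟩ : ∃ C, ∀ n, ‖ys n‖ ≤ C := by
    apply banach_steinhaus
    intro v
    obtain ⟨Cv, hCv⟩ := Filter.Tendsto.bddAbove_range ((hysconv v).norm)
    exact ⟨Cv, fun n => hCv ⟨n, rfl⟩⟩
  have hynorm : Tendsto (fun n => ‖yseq n - zE‖) atTop (𝓝 0) :=
    tendsto_iff_norm_sub_tendsto_zero.mp hyto
  have hmid : Tendsto (fun n => ys n (yseq n - zE)) atTop (𝓝 0) := by
    apply squeeze_zero_norm (a := fun n => C * ‖yseq n - zE‖)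
    · intro n
      calc ‖ys n (yseq n - zE)‖ ≤ ‖ys n‖ * ‖yseq n - zE‖ := (ys n).le_opNorm _
        _ ≤ C * ‖yseq n - zE‖ := mul_le_mul_of_nonneg_right (hC n) (norm_nonneg _)
    · simpa using hynorm.const_mul C
  have hβ : Tendsto (fun n => ys n (xbar - yseq n)) atTop (𝓝 (ystar (xbar - zE))) := by
    have h := ((hysconv xbar).sub (hysconv zE)).sub hmid
    rw [sub_zero] at h
    have he : ∀ n, ys n (xbar - yseq n) = ys n xbar - ys n zE - ys n (yseq n - zE) := by
      intro n
      rw [map_sub, map_sub]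
      ring
    have he2 : ystar xbar - ystar zE = ystar (xbar - zE) := (map_sub ystar xbar zE).symm
    rw [he2] at h
    exact Tendsto.congr (fun n => (he n).symm) h
  -- eventual finiteness and real convergence
  set a : ℝ := fR zE with hadef
  have hfto' : Tendsto (fun n => f (yseq n)) atTop (𝓝 ((a : ℝ) : EReal)) := by
    rw [← haE]; exact hfto
  have hIoo : ∀ᶠ n in atTop, f (yseq n) ∈ Ioo (((a - 1 : ℝ)) : EReal) (((a + 1 : ℝ)) : EReal) := by
    apply hfto'
    apply Ioo_mem_nhds
    · exact_mod_cast (by linarith : a - 1 < a)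
    · exact_mod_cast (by linarith : a < a + 1)
  have hev_eq : ∀ᶠ n in atTop, f (yseq n) = (((f (yseq n)).toReal : ℝ) : EReal) := by
    filter_upwards [hIoo] with n hn
    exact (EReal.coe_toReal (hn.2.trans (EReal.coe_lt_top _)).ne
      ((EReal.bot_lt_coe _).trans hn.1).ne').symm
  have hrto : Tendsto (fun n => (f (yseq n)).toReal) atTop (𝓝 a) := by
    rw [← EReal.tendsto_coe]
    exact Filter.Tendsto.congr' hev_eq hfto'
  have hsum : Tendsto (fun n => (f (yseq n)).toReal + ys n (xbar - yseq n)) atTop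
      (𝓝 (a + ystar (xbar - zE))) := hrto.add hβ
  have hev_gt : ∀ᶠ n in atTop, c < (f (yseq n)).toReal + ys n (xbar - yseq n) :=
    hsum.eventually (eventually_gt_nhds hcL)
  obtain ⟨n, hn1, hn2⟩ := (hev_eq.and hev_gt).exists
  refine ⟨yseq n, ys n, hysmem n, ?_⟩
  rw [hn1, ← EReal.coe_add]
  exact_mod_cast hn2


end AuxLemmas

open Metric Set in
theorem subdiff_domain_nonempty_and_sup_formula {X : Type*} [NormedAddCommGroup X]
    [NormedSpace ℝ X] [CompleteSpace X]
    (D : FeasibleSubdifferential X)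
    (f : X → EReal) (hfbot : ∀ x, f x ≠ ⊥) (hfproper : ∃ x, f x ≠ ⊤)
    (hflsc : LowerSemicontinuous f) :
    (∃ x : X, (D.D f x).Nonempty) ∧
    ∀ xbar : X,
      f xbar ≤ sSup {e : EReal | ∃ x : X, ∃ xs ∈ D.D f x, e = f x + ((xs (xbar - x) : ℝ) : EReal)} := by
  obtain ⟨x₀, hx₀⟩ := hfproper
  have hfx₀ : f x₀ = (((f x₀).toReal : ℝ) : EReal) := (EReal.coe_toReal hx₀ (hfbot x₀)).symm
  constructor
  · obtain ⟨x, xs, hmem, _⟩ := key_lemma D f hfbot hflsc x₀ hx₀ x₀ ((f x₀).toReal - 1)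
      (by rw [hfx₀]; exact_mod_cast (by linarith : (f x₀).toReal - 1 < (f x₀).toReal))
    exact ⟨x, xs, hmem⟩
  · intro xbar
    rw [le_sSup_iff]
    intro b hb
    by_contra hcon
    push_neg at hcon
    obtain ⟨c, hbc, hcf⟩ := EReal.exists_between_coe_real hcon
    obtain ⟨x, xs, hmem, hlt⟩ := key_lemma D f hfbot hflsc x₀ hx₀ xbar c hcf
    have helem : f x + ((xs (xbar - x) : ℝ) : EReal) ∈
        {e : EReal | ∃ x : X, ∃ xs ∈ D.D f x, e = f x + ((xs (xbar - x) : ℝ) : EReal)} :=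
      ⟨x, xs, hmem, rfl⟩
    have := hb helem
    exact absurd (lt_of_lt_of_le (lt_trans hbc hlt) this) (lt_irrefl b)
end
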